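/- arXiv:2510.03746 — 11 statements merged into one kernel-verified Lean document; each statement's English description precedes it below -/
import Mathlib

section
/- There is no nonempty finite graph G such that every vertex has degree exactly n and, for every vertex v, the neighborhood of v (the subgraph induced on the set of neighbors of v) contains exactly n(n-1)/2 - p_v edges for some integer p_v with 1 ≤ p_v < n/2 (where p_v may depend on v). -/
/-!
Call `u` and `w` twins when their closed neighbourhoods `N[u]` and `N[w]` coincide, and let
`S(v) = ∑_{u ∈ N[v]} #(N[v] \ N[u])`, which is twice the number of non-adjacent pairs in `N(v)`.
In a `d`-regular graph `N[v] ⊆ N[u]` already forces `N[u] = N[v]`, so every `u ∈ N[v]` that is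
not a twin of `v` contributes at least one to `S(v)`. Suppose `0 < S(v) < d` for every `v`.
Then fewer than `d` vertices of `N[v]` are non-twins of `v`, so every twin class has at least
two elements. Membership in `N[v] \ N[u]` only depends on `N[·]`, so it is a union of twin
classes, and each non-twin therefore contributes at least two: the twin class of `v` has at least
`(d + 3) / 2` elements. A non-twin `x ∈ N[v]`, which exists because `S(v) > 0`, then has two
disjoint twin classes of this size inside `N[x]`, which has only `d + 1` elements.
-/

open Finset

namespace SimpleGraph

variable {V : Type*} (G : SimpleGraph V) [Fintype V] [DecidableEq V] [DecidableRel G.Adj]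

def closedNeighborFinset (v : V) : Finset V := insert v (G.neighborFinset v)

def twinClass (v : V) : Finset V :=
  {u | G.closedNeighborFinset u = G.closedNeighborFinset v}

def neighborhoodDefect (v : V) : ℕ :=
  ∑ u ∈ G.closedNeighborFinset v, #(G.closedNeighborFinset v \ G.closedNeighborFinset u)

variable {G}

@[simp]
lemma mem_closedNeighborFinset {v w : V} :
    w ∈ G.closedNeighborFinset v ↔ w = v ∨ G.Adj v w := by
  simp [closedNeighborFinset]

lemma mem_closedNeighborFinset_comm {u v : V} :
    u ∈ G.closedNeighborFinset v ↔ v ∈ G.closedNeighborFinset u := by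
  simp only [mem_closedNeighborFinset, G.adj_comm, eq_comm]

lemma card_closedNeighborFinset (v : V) : #(G.closedNeighborFinset v) = G.degree v + 1 := by
  rw [closedNeighborFinset, card_insert_of_notMem (by simp), card_neighborFinset_eq_degree]

@[simp]
lemma mem_twinClass {u v : V} :
    u ∈ G.twinClass v ↔ G.closedNeighborFinset u = G.closedNeighborFinset v := by
  simp [twinClass]

lemma twinClass_subset_closedNeighborFinset {v x : V} (hx : x ∈ G.closedNeighborFinset v) :
    G.twinClass v ⊆ G.closedNeighborFinset x := fun z hz => by
  rwa [mem_closedNeighborFinset_comm, mem_twinClass.1 hz]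

lemma twinClass_subset_sdiff {u v y : V}
    (hy : y ∈ G.closedNeighborFinset v \ G.closedNeighborFinset u) :
    G.twinClass y ⊆ G.closedNeighborFinset v \ G.closedNeighborFinset u := fun z hz => by
  simpa only [mem_sdiff, mem_closedNeighborFinset_comm (v := v),
    mem_closedNeighborFinset_comm (v := u), mem_twinClass.1 hz] using hy

lemma disjoint_twinClass {v x : V} (hx : x ∉ G.twinClass v) :
    Disjoint (G.twinClass v) (G.twinClass x) :=
  Finset.disjoint_left.2 fun _ hv hx' =>
    hx (mem_twinClass.2 ((mem_twinClass.1 hx').symm.trans (mem_twinClass.1 hv)))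

lemma sdiff_twinClass_nonempty_of_neighborhoodDefect_pos {v : V}
    (h : 0 < G.neighborhoodDefect v) : (G.closedNeighborFinset v \ G.twinClass v).Nonempty := by
  by_contra! hempty
  refine h.ne' (sum_eq_zero fun u hu => ?_)
  have hu' : u ∈ G.twinClass v := by
    simpa [hempty] using sdiff_eq_empty_iff_subset.1 hempty hu
  simp [mem_twinClass.1 hu']

lemma card_sdiff_twinClass_mul_le_neighborhoodDefect {m : ℕ} {v : V}
    (hm : ∀ u ∈ G.closedNeighborFinset v \ G.twinClass v,
      m ≤ #(G.closedNeighborFinset v \ G.closedNeighborFinset u)) :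
    #(G.closedNeighborFinset v \ G.twinClass v) * m ≤ G.neighborhoodDefect v :=
  calc #(G.closedNeighborFinset v \ G.twinClass v) * m
      ≤ ∑ u ∈ G.closedNeighborFinset v \ G.twinClass v,
          #(G.closedNeighborFinset v \ G.closedNeighborFinset u) := by
        simpa using card_nsmul_le_sum _ _ _ hm
    _ ≤ G.neighborhoodDefect v := sum_le_sum_of_subset sdiff_subset

variable (G) in
lemma sum_card_sdiff_closedNeighborFinset_add_two_mul (s : Finset V) :
    ∑ u ∈ s, #(s \ G.closedNeighborFinset u) + 2 * Nat.card (G.induce (s : Set V)).edgeSet =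
      #s * (#s - 1) := by
  have hdeg (u : V) (hu : u ∈ s) :
      #(s \ G.closedNeighborFinset u) + (G.induce (s : Set V)).degree ⟨u, hu⟩ = #s - 1 := by
    have hinter : s ∩ G.closedNeighborFinset u = insert u (G.neighborFinset u ∩ s) := by
      ext w; by_cases w = u <;> aesop
    have hsplit := card_sdiff_add_card_inter s (G.closedNeighborFinset u)
    rw [hinter, card_insert_of_notMem (by simp)] at hsplit
    have hinduce : (G.induce (s : Set V)).degree ⟨u, hu⟩ = #(G.neighborFinset u ∩ s) := by
      rw [← card_neighborFinset_eq_degree]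
      convert congrArg card (G.map_neighborFinset_induce (s := (s : Set V)) ⟨u, hu⟩) using 1
      · rw [card_map]; congr!
      · rw [toFinset_coe]
    omega
  rw [Nat.card_eq_fintype_card, ← edgeFinset_card, ← sum_degrees_eq_twice_card_edges]
  calc _ = ∑ x : (s : Set V),
          (#(s \ G.closedNeighborFinset x) + (G.induce (s : Set V)).degree x) := by
        rw [sum_add_distrib, ← sum_coe_sort s]; rfl
    _ = ∑ _x : (s : Set V), (#s - 1) := sum_congr rfl fun x _ => hdeg x.1 x.2
    _ = #s * (#s - 1) := by simp

variable (G) in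
lemma neighborhoodDefect_add_two_mul_card_edgeSet (v : V) :
    G.neighborhoodDefect v + 2 * Nat.card (G.induce (G.neighborSet v)).edgeSet =
      G.degree v * (G.degree v - 1) := by
  have h := G.sum_card_sdiff_closedNeighborFinset_add_two_mul (G.neighborFinset v)
  rw [coe_neighborFinset, card_neighborFinset_eq_degree] at h
  rw [← h, neighborhoodDefect, closedNeighborFinset,
    sum_insert_zero (by simp [closedNeighborFinset])]
  congr 1
  refine sum_congr rfl fun u hu => ?_
  rw [insert_sdiff_of_mem _
    (mem_closedNeighborFinset.2 (Or.inr ((mem_neighborFinset ..).1 hu).symm))]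

namespace IsRegularOfDegree

variable {d : ℕ} (hG : G.IsRegularOfDegree d)
include hG

lemma sdiff_closedNeighborFinset_nonempty {u v : V} (hu : u ∉ G.twinClass v) :
    (G.closedNeighborFinset v \ G.closedNeighborFinset u).Nonempty := by
  rw [nonempty_iff_ne_empty, Ne, sdiff_eq_empty_iff_subset]
  refine fun h => hu (mem_twinClass.2 (eq_of_subset_of_card_le h ?_).symm)
  rw [card_closedNeighborFinset, card_closedNeighborFinset, hG, hG]

lemma card_twinClass_add_card_sdiff (v : V) :
    #(G.twinClass v) + #(G.closedNeighborFinset v \ G.twinClass v) = d + 1 := by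
  rw [add_comm, card_sdiff_add_card_eq_card (twinClass_subset_closedNeighborFinset (by simp)),
    card_closedNeighborFinset, hG]

lemma two_le_card_twinClass {v : V} (hv : G.neighborhoodDefect v < d) :
    2 ≤ #(G.twinClass v) := by
  have hK := card_sdiff_twinClass_mul_le_neighborhoodDefect (m := 1) (v := v) fun _ hu =>
    (hG.sdiff_closedNeighborFinset_nonempty (mem_sdiff.1 hu).2).card_pos
  have := hG.card_twinClass_add_card_sdiff v
  omega

lemma two_le_card_sdiff_closedNeighborFinset (hsmall : ∀ y, G.neighborhoodDefect y < d)
    {u v : V} (hu : u ∉ G.twinClass v) :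
    2 ≤ #(G.closedNeighborFinset v \ G.closedNeighborFinset u) := by
  obtain ⟨y, hy⟩ := hG.sdiff_closedNeighborFinset_nonempty hu
  exact (hG.two_le_card_twinClass (hsmall y)).trans (card_le_card (twinClass_subset_sdiff hy))

lemma add_three_le_two_mul_card_twinClass (hsmall : ∀ y, G.neighborhoodDefect y < d)
    (v : V) : d + 3 ≤ 2 * #(G.twinClass v) := by
  have hK := card_sdiff_twinClass_mul_le_neighborhoodDefect (m := 2) (v := v) fun _ hu =>
    hG.two_le_card_sdiff_closedNeighborFinset hsmall (mem_sdiff.1 hu).2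
  have := hG.card_twinClass_add_card_sdiff v
  have := hsmall v
  omega

theorem exists_neighborhoodDefect_eq_zero_or_le [Nonempty V] :
    ∃ v, G.neighborhoodDefect v = 0 ∨ d ≤ G.neighborhoodDefect v := by
  by_contra! h
  have hsmall y := (h y).2
  obtain ⟨v⟩ := ‹Nonempty V›
  obtain ⟨x, hx⟩ :=
    sdiff_twinClass_nonempty_of_neighborhoodDefect_pos (Nat.pos_of_ne_zero (h v).1)
  rw [mem_sdiff] at hx
  have hsub : G.twinClass v ∪ G.twinClass x ⊆ G.closedNeighborFinset x :=
    union_subset (twinClass_subset_closedNeighborFinset hx.1)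
      (twinClass_subset_closedNeighborFinset (by simp))
  have hcard := card_le_card hsub
  rw [card_union_of_disjoint (disjoint_twinClass hx.2), card_closedNeighborFinset, hG] at hcard
  have := hG.add_three_le_two_mul_card_twinClass hsmall v
  have := hG.add_three_le_two_mul_card_twinClass hsmall x
  omega

end IsRegularOfDegree

end SimpleGraph

/-- Lemma on dense neighborhoods: there is no nonempty finite graph in which every
vertex has degree `n` and the neighborhood of each vertex `v` has exactly
`n(n-1)/2 - p_v` edges with `1 ≤ p_v < n/2`. -/
theorem stmt0 (n : ℕ) :
    ¬ ∃ (V : Type) (_ : Fintype V) (_ : Nonempty V) (G : SimpleGraph V),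
        (∀ v : V, Nat.card (G.neighborSet v) = n) ∧
        (∀ v : V, ∃ p : ℕ, 1 ≤ p ∧ 2 * p < n ∧
          Nat.card (G.induce (G.neighborSet v)).edgeSet = n * (n - 1) / 2 - p) := by
  rintro ⟨V, _, _, G, hdeg, hp⟩
  classical
  have hG : G.IsRegularOfDegree n := fun v => by
    rw [← G.card_neighborSet_eq_degree, ← Nat.card_eq_fintype_card, hdeg v]
  obtain ⟨v, hv⟩ := hG.exists_neighborhoodDefect_eq_zero_or_le
  obtain ⟨p, hp1, hpn, hedges⟩ := hp v
  have hsum := G.neighborhoodDefect_add_two_mul_card_edgeSet v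
  rw [hedges, hG v] at hsum
  obtain ⟨k, hk⟩ := Nat.even_mul_pred_self n
  have : n * 2 ≤ n * (n - 1) := Nat.mul_le_mul_left n (by omega)
  omega
end

section
/- Let G be a finite simple graph in which every vertex has degree n, and suppose that for every vertex v the neighborhood of v misses at least one edge (i.e., is not a complete graph on n vertices). Then for every vertex v, if w is a vertex in the neighborhood of v of maximal 'antidegree' k = (n-1) - deg_{O(v)}(w) within O(v), and the neighborhood of w misses fewer than n/2 edges, then there exist at least k vertices in O(w) adjacent to all other vertices of O(w). -/
/-!
Let `H = O(w)` and let `Hᶜ` be its complement on the vertex set `N(w)`. Since `v ∈ N(w)`, the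
antidegree `k` of `w` in `O(v)` equals `n - 1 - |N(v) ∩ N(w)|`, which is the degree of `v` in
`Hᶜ`. By the handshake lemma `Hᶜ` has at most `2m - k + 1` non-isolated vertices, where
`m < n / 2` is its number of edges, so at least `k` of its `n` vertices are isolated, i.e.
adjacent in `O(w)` to all other vertices of `O(w)`.
-/

open Finset

namespace SimpleGraph

variable {V : Type*} (G : SimpleGraph V)

theorem card_edgeFinset_add_card_edgeFinset_compl [Fintype V] [DecidableEq V]
    [DecidableRel G.Adj] : #G.edgeFinset + #Gᶜ.edgeFinset = (Fintype.card V).choose 2 := by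
  rw [← card_union_of_disjoint (disjoint_edgeFinset.2 disjoint_compl_right), ← edgeFinset_sup,
    ← card_edgeFinset_top_eq_card_choose_two]
  congr! 2
  exact sup_compl_eq_top

theorem card_add_degree_le_card_isolated_add_two_mul_card_edgeFinset [Fintype V]
    [DecidableRel G.Adj] (x : V) :
    Fintype.card V + G.degree x ≤ #{u | G.degree u = 0} + 2 * #G.edgeFinset + 1 := by
  classical
  set t := ({u | ¬G.degree u = 0} : Finset V).erase x
  have hsum : G.degree x + #t ≤ 2 * #G.edgeFinset :=
    calc G.degree x + #t = G.degree x + ∑ _u ∈ t, 1 := by rw [card_eq_sum_ones]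
      _ ≤ G.degree x + ∑ u ∈ t, G.degree u := by
        gcongr with u hu
        exact Nat.one_le_iff_ne_zero.2 (by simpa using mem_of_mem_erase hu)
      _ = ∑ u ∈ insert x t, G.degree u := by rw [sum_insert (notMem_erase x _)]
      _ ≤ ∑ u, G.degree u := sum_le_sum_of_subset (subset_univ _)
      _ = 2 * #G.edgeFinset := G.sum_degrees_eq_twice_card_edges
  have hsplit := card_filter_add_card_filter_not (s := univ) (fun u => G.degree u = 0)
  have herase : #{u | ¬G.degree u = 0} - 1 ≤ #t := pred_card_le_card_erase
  rw [card_univ] at hsplit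
  omega

theorem degree_induce_eq_card_inter {s : Set V} {v : V} (hv : v ∈ s)
    [Fintype ((G.induce s).neighborSet ⟨v, hv⟩)] :
    (G.induce s).degree ⟨v, hv⟩ = Nat.card ↥(G.neighborSet v ∩ s) := by
  rw [← card_neighborSet_eq_degree, ← Nat.card_eq_fintype_card]
  exact Nat.card_congr
    { toFun := fun u => ⟨u.1.1, u.2, u.1.2⟩
      invFun := fun u => ⟨⟨u.1, u.2.2⟩, u.2.1⟩ }

theorem adj_of_degree_compl_eq_zero {u y : V} [Fintype (Gᶜ.neighborSet u)]
    (hu : Gᶜ.degree u = 0) (hne : u ≠ y) : G.Adj u y := by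
  by_contra h
  exact (Gᶜ.degree_eq_zero u).1 hu y ⟨hne, h⟩

end SimpleGraph

theorem stmt1_general {V : Type} [Fintype V] (G : SimpleGraph V) (n : ℕ)
    (hreg : ∀ v : V, Nat.card (G.neighborSet v) = n)
    (v w : V) (hw : w ∈ G.neighborSet v)
    -- `O(w)` misses fewer than `n/2` edges
    (hdense : 2 * (n * (n - 1) / 2 - Nat.card (G.induce (G.neighborSet w)).edgeSet) < n) :
    ∃ S : Set V, S ⊆ G.neighborSet w ∧
      (n - 1) - Nat.card ↥(G.neighborSet v ∩ G.neighborSet w) ≤ Nat.card S ∧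
      ∀ x ∈ S, ∀ u ∈ G.neighborSet w, u ≠ x → G.Adj x u := by
  classical
  set H := G.induce (G.neighborSet w)
  have hv : v ∈ G.neighborSet w := G.adj_symm hw
  have hcard : Fintype.card (G.neighborSet w) = n := by
    rw [← Nat.card_eq_fintype_card, hreg]
  have hdeg : Hᶜ.degree ⟨v, hv⟩ = n - 1 - Nat.card ↥(G.neighborSet v ∩ G.neighborSet w) := by
    rw [SimpleGraph.degree_compl, hcard, G.degree_induce_eq_card_inter hv]
  have hmissing : #Hᶜ.edgeFinset = n * (n - 1) / 2 - Nat.card H.edgeSet := by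
    have := H.card_edgeFinset_add_card_edgeFinset_compl
    rw [hcard, Nat.choose_two_right] at this
    rw [Nat.card_eq_fintype_card, ← SimpleGraph.edgeFinset_card]
    omega
  have hcount := Hᶜ.card_add_degree_le_card_isolated_add_two_mul_card_edgeFinset ⟨v, hv⟩
  refine ⟨Subtype.val '' (↑({u | Hᶜ.degree u = 0} : Finset (G.neighborSet w)) :
    Set (G.neighborSet w)), Subtype.coe_image_subset _ _, ?_, ?_⟩
  · rw [Nat.card_image_of_injective Subtype.val_injective, Finset.coe_sort_coe,
      Nat.card_eq_finsetCard]
    omega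
  · rintro _ ⟨x, hx, rfl⟩ u hu hne
    exact H.adj_of_degree_compl_eq_zero (y := ⟨u, hu⟩) (by simpa using hx)
      (fun h => hne (congrArg Subtype.val h).symm)

/-- If every vertex of a finite graph `G` has degree `n`, every neighborhood misses at
least one edge, `w` is a vertex of maximal antidegree `k = (n-1) - deg_{O(v)}(w)` in the
neighborhood `O(v)` of `v`, and the neighborhood `O(w)` misses fewer than `n/2` edges,
then `O(w)` contains at least `k` vertices adjacent to all other vertices of `O(w)`. -/
theorem stmt1 {V : Type} [Fintype V] (G : SimpleGraph V) (n : ℕ)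
    (hreg : ∀ v : V, Nat.card (G.neighborSet v) = n)
    (hnotcomplete : ∀ v : V,
      Nat.card (G.induce (G.neighborSet v)).edgeSet < n * (n - 1) / 2)
    (v w : V) (hw : w ∈ G.neighborSet v)
    -- `w` has maximal antidegree in `O(v)`; here `deg_{O(v)}(u) = |N(v) ∩ N(u)|`
    (hmax : ∀ u ∈ G.neighborSet v,
      (n - 1) - Nat.card ↥(G.neighborSet v ∩ G.neighborSet u) ≤
        (n - 1) - Nat.card ↥(G.neighborSet v ∩ G.neighborSet w))
    -- `O(w)` misses fewer than `n/2` edges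
    (hdense : 2 * (n * (n - 1) / 2 - Nat.card (G.induce (G.neighborSet w)).edgeSet) < n) :
    ∃ S : Set V, S ⊆ G.neighborSet w ∧
      (n - 1) - Nat.card ↥(G.neighborSet v ∩ G.neighborSet w) ≤ Nat.card S ∧
      ∀ x ∈ S, ∀ u ∈ G.neighborSet w, u ≠ x → G.Adj x u :=
  stmt1_general G n hreg v w hw hdense
end

section
/- Let a group G act on a set U, let F be a finite subset of U, and let X be a finite subset of U such that gF ∩ X ≠ ∅ for every g ∈ G. Let V_1, ..., V_n be the G-orbits meeting F, and suppose each V_i is finite. Then ∑_{i=1}^n |F ∩ V_i| · |X ∩ V_i| / |V_i| ≥ 1. -/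
open Pointwise

/-- Theorem 1.1: if `X` meets every translate `gF` and `V₁, …, Vₙ` are the (finite)
orbits meeting `F`, then `∑ᵢ |F ∩ Vᵢ|·|X ∩ Vᵢ|/|Vᵢ| ≥ 1`. -/
theorem stmt3 {G U : Type} [Group G] [MulAction G U]
    (F X : Set U) (hFfin : F.Finite) (hXfin : X.Finite)
    (hrep : ∀ g : G, ((g • F) ∩ X).Nonempty)
    (n : ℕ) (Vo : Fin n → Set U)
    (horb : ∀ i, ∃ u : U, Vo i = MulAction.orbit G u)
    (hfin : ∀ i, (Vo i).Finite)
    (hmeet : ∀ i, (F ∩ Vo i).Nonempty)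
    (hall : ∀ f ∈ F, ∃ i, f ∈ Vo i)
    (hdisj : ∀ i j, i ≠ j → Vo i ≠ Vo j) :
    1 ≤ ∑ i : Fin n,
      (Nat.card ↥(F ∩ Vo i) * Nat.card ↥(X ∩ Vo i) : ℚ) / (Nat.card ↥(Vo i)) := by
  classical
  -- basic orbit facts
  have hVinv : ∀ i (g : G) u, u ∈ Vo i → g • u ∈ Vo i := by
    intro i g u hu
    obtain ⟨v, hv⟩ := horb i
    rw [hv] at hu ⊢
    obtain ⟨a, ha⟩ := MulAction.mem_orbit_iff.mp hu
    exact MulAction.mem_orbit_iff.mpr ⟨g * a, by rw [mul_smul, ha]⟩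
  have htrans : ∀ i (u u' : U), u ∈ Vo i → u' ∈ Vo i → ∃ g : G, g • u = u' := by
    intro i u u' hu hu'
    obtain ⟨v, hv⟩ := horb i
    rw [hv] at hu hu'
    obtain ⟨a, ha⟩ := MulAction.mem_orbit_iff.mp hu
    obtain ⟨b, hb⟩ := MulAction.mem_orbit_iff.mp hu'
    exact ⟨b * a⁻¹, by rw [← ha, ← hb, mul_smul, inv_smul_smul]⟩
  have hdisj' : ∀ i j (u : U), u ∈ Vo i → u ∈ Vo j → i = j := by
    intro i j u hi hj
    by_contra hne
    have horbeq : ∀ k (w : U), w ∈ Vo k → Vo k = MulAction.orbit G w := by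
      intro k w hw
      ext z
      constructor
      · intro hz
        obtain ⟨g, hg⟩ := htrans k w z hw hz
        exact MulAction.mem_orbit_iff.mpr ⟨g, hg⟩
      · intro hz
        obtain ⟨g, hg⟩ := MulAction.mem_orbit_iff.mp hz
        exact hg ▸ hVinv k g w hw
    exact hdisj i j hne ((horbeq i u hi).trans (horbeq j u hj).symm)
  set W : Set U := ⋃ i, Vo i with hWdef
  have hWfin : W.Finite := Set.finite_iUnion hfin
  have hWinv : ∀ (g : G) (u : U), u ∈ W → g • u ∈ W := by
    intro g u hu
    simp only [hWdef, Set.mem_iUnion] at hu ⊢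
    obtain ⟨i, hi⟩ := hu
    exact ⟨i, hVinv i g u hi⟩
  have hVsub : ∀ i, Vo i ⊆ W := fun i u hu => Set.mem_iUnion.2 ⟨i, hu⟩
  haveI : Fintype ↥W := hWfin.fintype
  -- the permutation induced by g on W
  let ψ : G → Equiv.Perm ↥W := fun g =>
    { toFun := fun w => ⟨g • (w : U), hWinv g w w.2⟩
      invFun := fun w => ⟨g⁻¹ • (w : U), hWinv g⁻¹ w w.2⟩
      left_inv := fun w => Subtype.ext (inv_smul_smul g (w : U))
      right_inv := fun w => Subtype.ext (smul_inv_smul g (w : U)) }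
  have hψmul : ∀ g g' : G, ψ g * ψ g' = ψ (g * g') := by
    intro g g'
    ext w
    exact (mul_smul g g' (w : U)).symm
  let Hf : Finset (Equiv.Perm ↥W) := Finset.univ.filter (fun h => ∃ g, ψ g = h)
  have hmemHf : ∀ g : G, ψ g ∈ Hf := fun g => Finset.mem_filter.2 ⟨Finset.mem_univ _, g, rfl⟩
  have hHfspec : ∀ h ∈ Hf, ∃ g, ψ g = h := fun h hh => (Finset.mem_filter.1 hh).2
  have hHfpos : 0 < Hf.card := Finset.card_pos.2 ⟨ψ 1, hmemHf 1⟩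
  -- finsets inside W
  let F' : Finset ↥W := Finset.univ.filter (fun w => (w : U) ∈ F)
  let X' : Finset ↥W := Finset.univ.filter (fun w => (w : U) ∈ X)
  let Vi : Fin n → Finset ↥W := fun i => Finset.univ.filter (fun w => (w : U) ∈ Vo i)
  -- card conversion
  have haux : ∀ A : Set U, A ⊆ W →
      Nat.card ↥A = (Finset.univ.filter (fun w : ↥W => (w : U) ∈ A)).card := by
    intro A hA
    have e : ↥A ≃ {w : ↥W // (w : U) ∈ A} :=
      { toFun := fun a => ⟨⟨a, hA a.2⟩, a.2⟩
        invFun := fun w => ⟨w.1, w.2⟩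
        left_inv := fun a => rfl
        right_inv := fun w => rfl }
    rw [Nat.card_congr e, Nat.card_eq_fintype_card, Fintype.card_subtype]
  -- the fiber count
  let c : ↥W → ↥W → ℕ := fun f x => (Hf.filter (fun h => h f = x)).card
  -- each h meets: the pair set is nonempty
  have hψone : ψ 1 = 1 := by
    ext w
    exact one_smul G (w : U)
  have hψapp : ∀ (g : G) (w : ↥W), ((ψ g w : ↥W) : U) = g • (w : U) := fun g w => rfl
  have hmain1 : ∀ h ∈ Hf, 1 ≤ ((F' ×ˢ X').filter (fun p => h p.1 = p.2)).card := by
    intro h hh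
    obtain ⟨g, rfl⟩ := hHfspec h hh
    obtain ⟨u, huF, huX⟩ := hrep g
    obtain ⟨f, hfF, hfu⟩ := huF
    obtain ⟨i, hfi⟩ := hall f hfF
    have hfW : f ∈ W := hVsub i hfi
    have huW : u ∈ W := hfu ▸ hWinv g f hfW
    refine Finset.card_pos.2 ⟨(⟨f, hfW⟩, ⟨u, huW⟩), ?_⟩
    refine Finset.mem_filter.2 ⟨Finset.mem_product.2 ⟨?_, ?_⟩, ?_⟩
    · exact Finset.mem_filter.2 ⟨Finset.mem_univ _, hfF⟩
    · exact Finset.mem_filter.2 ⟨Finset.mem_univ _, huX⟩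
    · exact Subtype.ext (by simpa [hψapp] using hfu)
  -- total count over h
  have hswap : ∑ h ∈ Hf, ((F' ×ˢ X').filter (fun p => h p.1 = p.2)).card
      = ∑ p ∈ F' ×ˢ X', c p.1 p.2 := by
    calc ∑ h ∈ Hf, ((F' ×ˢ X').filter (fun p => h p.1 = p.2)).card
        = ∑ h ∈ Hf, ∑ p ∈ F' ×ˢ X', if h p.1 = p.2 then 1 else 0 :=
          Finset.sum_congr rfl (fun h _ => Finset.card_filter _ _)
      _ = ∑ p ∈ F' ×ˢ X', ∑ h ∈ Hf, if h p.1 = p.2 then 1 else 0 := Finset.sum_comm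
      _ = ∑ p ∈ F' ×ˢ X', c p.1 p.2 :=
          Finset.sum_congr rfl (fun p _ => (Finset.card_filter _ _).symm)
  -- orbit-stabilizer: c f x * |Vi| = |Hf| for f, x in same orbit, 0 if x outside
  have hconst : ∀ i, ∀ f x : ↥W, (f : U) ∈ Vo i → (x : U) ∈ Vo i →
      c f x * (Vi i).card = Hf.card := by
    intro i f x hf hx
    have hmapsto : ∀ h ∈ Hf, h f ∈ Vi i := by
      intro h hh
      obtain ⟨g, rfl⟩ := hHfspec h hh
      exact Finset.mem_filter.2 ⟨Finset.mem_univ _, by rw [hψapp]; exact hVinv i g _ hf⟩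
    have hA : Hf.card = ∑ x' ∈ Vi i, c f x' :=
      Finset.card_eq_sum_card_fiberwise hmapsto
    have hB : ∀ x' ∈ Vi i, c f x' = c f x := by
      intro x' hx'
      have hx'V : (x' : U) ∈ Vo i := (Finset.mem_filter.1 hx').2
      obtain ⟨g0, hg0⟩ := htrans i (x : U) (x' : U) hx hx'V
      have hHfmul : ∀ (g : G), ∀ h ∈ Hf, ψ g * h ∈ Hf := by
        intro g h hh
        obtain ⟨g', rfl⟩ := hHfspec h hh
        rw [hψmul]
        exact hmemHf _
      have himg : Hf.filter (fun h => h f = x')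
          = (Hf.filter (fun h => h f = x)).image (fun h => ψ g0 * h) := by
        ext h'
        simp only [Finset.mem_image, Finset.mem_filter]
        constructor
        · rintro ⟨hh1, hh2⟩
          refine ⟨ψ g0⁻¹ * h', ⟨⟨hHfmul g0⁻¹ h' hh1, ?_⟩, ?_⟩⟩
          · show (ψ g0⁻¹) (h' f) = x
            rw [hh2]
            exact Subtype.ext (by rw [hψapp, ← hg0, inv_smul_smul])
          · rw [← mul_assoc, hψmul, mul_inv_cancel, hψone, one_mul]
        · rintro ⟨h, ⟨hh1, hh2⟩, rfl⟩
          refine ⟨hHfmul g0 h hh1, ?_⟩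
          show (ψ g0) (h f) = x'
          rw [hh2]
          exact Subtype.ext (by rw [hψapp, hg0])
      show (Hf.filter (fun h => h f = x')).card = (Hf.filter (fun h => h f = x)).card
      rw [himg]
      exact Finset.card_image_of_injective _ (mul_right_injective (ψ g0))
    calc c f x * (Vi i).card = ∑ _x' ∈ Vi i, c f x := by
          rw [Finset.sum_const, smul_eq_mul, mul_comm]
      _ = ∑ x' ∈ Vi i, c f x' := (Finset.sum_congr rfl hB).symm
      _ = Hf.card := hA.symm
  have hzero : ∀ i, ∀ f x : ↥W, (f : U) ∈ Vo i → (x : U) ∉ Vo i → c f x = 0 := by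
    intro i f x hf hx
    refine Finset.card_eq_zero.2 (Finset.filter_eq_empty_iff.2 ?_)
    intro h hh heq
    obtain ⟨g, rfl⟩ := hHfspec h hh
    apply hx
    rw [← heq, hψapp]
    exact hVinv i g _ hf
  -- choose the orbit index of each element of W
  let ι : ↥W → Fin n := fun w => (Set.mem_iUnion.1 w.2).choose
  have hιspec : ∀ w : ↥W, (w : U) ∈ Vo (ι w) := fun w => (Set.mem_iUnion.1 w.2).choose_spec
  have hVipos : ∀ i, 0 < (Vi i).card := by
    intro i
    obtain ⟨u, _, huV⟩ := hmeet i
    exact Finset.card_pos.2 ⟨⟨u, hVsub i huV⟩, Finset.mem_filter.2 ⟨Finset.mem_univ _, huV⟩⟩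
  -- main chain in ℚ
  have key1 : (Hf.card : ℚ) ≤ ∑ f ∈ F', ∑ x ∈ X', (c f x : ℚ) := by
    have h1 : Hf.card ≤ ∑ p ∈ F' ×ˢ X', c p.1 p.2 := by
      rw [← hswap]
      calc Hf.card = ∑ _h ∈ Hf, 1 := by rw [Finset.sum_const, smul_eq_mul, mul_one]
        _ ≤ _ := Finset.sum_le_sum hmain1
    calc (Hf.card : ℚ) ≤ ∑ p ∈ F' ×ˢ X', (c p.1 p.2 : ℚ) := by exact_mod_cast h1
      _ = _ := Finset.sum_product _ _ _
  have key2 : ∑ f ∈ F', ∑ x ∈ X', (c f x : ℚ)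
      = ∑ i, ((F'.filter (fun f => ι f = i)).card : ℚ) *
          (((X'.filter (fun x : ↥W => (x : U) ∈ Vo i)).card : ℚ) * Hf.card / (Vi i).card) := by
    rw [← Finset.sum_fiberwise F' ι (fun f => ∑ x ∈ X', (c f x : ℚ))]
    refine Finset.sum_congr rfl (fun i _ => ?_)
    rw [Finset.sum_congr rfl
      (g := fun _ => ((X'.filter (fun x : ↥W => (x : U) ∈ Vo i)).card : ℚ) * Hf.card / (Vi i).card) ?_]
    · rw [Finset.sum_const, nsmul_eq_mul]
    · intro f hf
      have hfi : (f : U) ∈ Vo i := by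
        have := hιspec f
        rwa [(Finset.mem_filter.1 hf).2] at this
      rw [← Finset.sum_filter_of_ne (p := fun x : ↥W => (x : U) ∈ Vo i)
        (f := fun x => (c f x : ℚ)) ?_]
      · rw [Finset.sum_congr rfl (g := fun _ => (Hf.card : ℚ) / (Vi i).card) ?_]
        · rw [Finset.sum_const, nsmul_eq_mul, mul_div_assoc]
        · intro x hx
          have hxi : (x : U) ∈ Vo i := (Finset.mem_filter.1 hx).2
          have hc := hconst i f x hfi hxi
          have hv : ((Vi i).card : ℚ) ≠ 0 := by exact_mod_cast (hVipos i).ne'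
          rw [eq_div_iff hv]
          exact_mod_cast hc
      · intro x _ hcx
        by_contra hxV
        apply hcx
        show ((c f x : ℕ) : ℚ) = 0
        exact_mod_cast hzero i f x hfi hxV
  -- identify the fibers with F' ∩ Vi
  have hfib : ∀ i, F'.filter (fun f => ι f = i) = F'.filter (fun f : ↥W => (f : U) ∈ Vo i) := by
    intro i
    refine Finset.filter_congr (fun f _ => ?_)
    constructor
    · intro h
      exact h ▸ hιspec f
    · intro h
      exact hdisj' (ι f) i (f : U) (hιspec f) h
  -- convert cards
  have hcardF : ∀ i, (F'.filter (fun f : ↥W => (f : U) ∈ Vo i)).card = Nat.card ↥(F ∩ Vo i) := by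
    intro i
    rw [haux (F ∩ Vo i) (fun u hu => hVsub i hu.2)]
    congr 1
    simp [F', Finset.filter_filter, Set.mem_inter_iff]
  have hcardX : ∀ i, (X'.filter (fun x : ↥W => (x : U) ∈ Vo i)).card = Nat.card ↥(X ∩ Vo i) := by
    intro i
    rw [haux (X ∩ Vo i) (fun u hu => hVsub i hu.2)]
    congr 1
    simp [X', Finset.filter_filter, Set.mem_inter_iff]
  have hcardV : ∀ i, (Vi i).card = Nat.card ↥(Vo i) := fun i => (haux (Vo i) (hVsub i)).symm
  have hHq : (0 : ℚ) < Hf.card := by exact_mod_cast hHfpos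
  have final : (Hf.card : ℚ) ≤
      (∑ i : Fin n, (Nat.card ↥(F ∩ Vo i) * Nat.card ↥(X ∩ Vo i) : ℚ) / (Nat.card ↥(Vo i)))
        * Hf.card := by
    calc (Hf.card : ℚ) ≤ ∑ f ∈ F', ∑ x ∈ X', (c f x : ℚ) := key1
      _ = _ := by
        rw [key2, Finset.sum_mul]
        refine Finset.sum_congr rfl (fun i _ => ?_)
        rw [hfib i, hcardF i, hcardX i, ← hcardV i]
        ring
  calc (1 : ℚ) = Hf.card / Hf.card := by rw [div_self hHq.ne']
    _ ≤ _ := by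
      rw [div_le_iff₀ hHq]
      simpa using final
end

section
/- Let a group G be covered by finitely many left cosets of subgroups. Then the cosets corresponding to subgroups of infinite index can be removed and the remaining cosets still cover G. -/
open Pointwise

/-- B. H. Neumann's theorem: if a group is covered by finitely many left cosets of
subgroups, then the cosets of the subgroups of infinite index may be removed and the
remaining cosets still cover the group. -/
theorem stmt5 {G : Type} [Group G] (s : ℕ) (g : Fin s → G) (H : Fin s → Subgroup G)
    (hcover : ∀ x : G, ∃ i, x ∈ g i • (H i : Set G)) :
    ∀ x : G, ∃ i, (H i).FiniteIndex ∧ x ∈ g i • (H i : Set G) := by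
  classical
  have hcovers : ⋃ i ∈ (Finset.univ : Finset (Fin s)), g i • (H i : Set G) = Set.univ := by
    ext x
    simp only [Set.mem_iUnion, Set.mem_univ, iff_true, Finset.mem_univ, exists_prop, true_and]
    exact hcover x
  have h := Subgroup.leftCoset_cover_filter_FiniteIndex hcovers
  intro x
  have hx : x ∈ ⋃ k ∈ Finset.univ.filter (fun i => (H i).FiniteIndex), g k • (H k : Set G) := by
    rw [h]; trivial
  simp only [Set.mem_iUnion, Finset.mem_filter, Finset.mem_univ, true_and, exists_prop] at hx
  obtain ⟨i, hi, hxi⟩ := hx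
  exact ⟨i, hi, hxi⟩
end

section
/- Let a group G act on a set U, let F be a finite subset of U, and let X be a finite subset of U such that gF ∩ X ≠ ∅ for every g ∈ G. Then there exists an element f ∈ F lying in a finite G-orbit such that the orbit of f meets X; consequently, removing from X all elements lying in infinite orbits still yields a set X' with gF ∩ X' ≠ ∅ for all g ∈ G. -/
open Pointwise

/-- If a finite set `X` meets every translate `gF` of a finite set `F`, then some
`f ∈ F` lies in a finite orbit whose intersection with `X` is nonempty; consequently,
discarding from `X` the elements lying in infinite orbits still yields a system of
representatives for the translates of `F`. -/
theorem stmt6 {G U : Type} [Group G] [MulAction G U]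
    (F X : Set U) (hFfin : F.Finite) (hXfin : X.Finite)
    (hrep : ∀ g : G, ((g • F) ∩ X).Nonempty) :
    (∃ f ∈ F, (MulAction.orbit G f).Finite ∧ (MulAction.orbit G f ∩ X).Nonempty) ∧
    (∀ g : G, ((g • F) ∩ {x ∈ X | (MulAction.orbit G x).Finite}).Nonempty) := by
  classical
  -- index set: pairs (f, x) with f ∈ F, x ∈ X, x in the orbit of f
  set s : Finset (U × U) :=
    (hFfin.toFinset ×ˢ hXfin.toFinset).filter (fun p => ∃ g : G, g • p.1 = p.2) with hs
  have hchoice : ∀ p ∈ s, ∃ g : G, g • p.1 = p.2 := fun p hp => (Finset.mem_filter.mp hp).2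
  choose! c hc using hchoice
  set H : U × U → Subgroup G := fun p => MulAction.stabilizer G p.1 with hH
  have hcovers : ⋃ k ∈ s, c k • (H k : Set G) = Set.univ := by
    ext g
    simp only [Set.mem_iUnion, Set.mem_univ, iff_true]
    obtain ⟨y, hyF, hyX⟩ := hrep g
    obtain ⟨f, hfF, rfl⟩ := hyF
    have hps : (f, g • f) ∈ s := by
      rw [hs, Finset.mem_filter, Finset.mem_product, hFfin.mem_toFinset, hXfin.mem_toFinset]
      exact ⟨⟨hfF, hyX⟩, g, rfl⟩
    refine ⟨(f, g • f), hps, ?_⟩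
    rw [mem_leftCoset_iff]
    have := hc _ hps
    simp only [hH, SetLike.mem_coe, MulAction.mem_stabilizer_iff, mul_smul]
    rw [inv_smul_eq_iff]
    exact this.symm
  have hcovers' := Subgroup.leftCoset_cover_filter_FiniteIndex hcovers
  -- key claim: every g lies in a coset corresponding to a finite-index stabilizer
  have key : ∀ g : G, ∃ f ∈ F, g • f ∈ X ∧ (MulAction.orbit G f).Finite := by
    intro g
    have : g ∈ ⋃ k ∈ s.filter (fun i => (H i).FiniteIndex), c k • (H k : Set G) := by
      rw [hcovers']; trivial
    simp only [Set.mem_iUnion] at this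
    obtain ⟨p, hp, hgp⟩ := this
    rw [Finset.mem_filter] at hp
    obtain ⟨hps, hfi⟩ := hp
    have hmem := Finset.mem_filter.mp hps
    rw [Finset.mem_product, hFfin.mem_toFinset, hXfin.mem_toFinset] at hmem
    refine ⟨p.1, hmem.1.1, ?_, ?_⟩
    · -- g • p.1 = c p • p.1 = p.2 ∈ X
      rw [mem_leftCoset_iff] at hgp
      simp only [hH, SetLike.mem_coe, MulAction.mem_stabilizer_iff] at hgp
      have : g • p.1 = c p • p.1 := by
        rw [mul_smul] at hgp
        have h2 := congrArg (fun y => c p • y) hgp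
        simpa using h2
      rw [this, hc p hps]
      exact hmem.1.2
    · -- orbit is finite since stabilizer has finite index
      haveI : (MulAction.stabilizer G p.1).FiniteIndex := hfi
      haveI : Finite (G ⧸ MulAction.stabilizer G p.1) := inferInstance
      haveI : Finite (MulAction.orbit G p.1) :=
        Finite.of_equiv _ (MulAction.orbitEquivQuotientStabilizer G p.1).symm
      exact (MulAction.orbit G p.1).toFinite
  constructor
  · obtain ⟨f, hfF, hfX, hfin⟩ := key 1
    rw [one_smul] at hfX
    exact ⟨f, hfF, hfin, f, MulAction.mem_orbit_self f, hfX⟩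
  · intro g
    obtain ⟨f, hfF, hfX, hfin⟩ := key g
    refine ⟨g • f, ⟨f, hfF, rfl⟩, hfX, ?_⟩
    simpa [MulAction.orbit_smul] using hfin
end

section
/- Let Γ be a finite graph, K a finite graph, and suppose X ⊆ V(Γ) is a minimum-size set such that every subgraph of Γ isomorphic to K contains a vertex of X, and Y ⊆ V(Γ) is a minimum-size Aut(Γ)-invariant set with the same property, with |Y| = |X| · |V(K)|. Then for every Aut(Γ)-orbit V of vertices of Γ that intersects X, we have |V| = |V(K)| · |X ∩ V|. -/
/-- `X` meets every subgraph of `Γ` isomorphic to `K`. -/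
def KCover {W V : Type} (K : SimpleGraph W) (Γ : SimpleGraph V) (X : Set V) : Prop :=
  ∀ f : K →g Γ, Function.Injective f → ∃ w : W, f w ∈ X

/-- `X` is invariant under all automorphisms of `Γ`. -/
def AutInvariant {V : Type} (Γ : SimpleGraph V) (X : Set V) : Prop :=
  ∀ g : Γ ≃g Γ, (fun v => g v) '' X = X

/-- The `Aut Γ`-orbit of a vertex. -/
def autOrbit {V : Type} (Γ : SimpleGraph V) (v : V) : Set V :=
  {w | ∃ g : Γ ≃g Γ, g v = w}

/-!
Let `G = Aut Γ` act on `V` and call a vertex `u` heavy when at least a `1/|W|` fraction of the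
automorphisms send `u` into `X`, i.e. `|Gu| ≤ |W|·|X ∩ Gu|`. The heavy vertices form a
`G`-invariant set `H`, and `H` meets every copy `f` of `K`: every translate `g ∘ f` is again a
copy and meets `X`, so averaging over `g` the fractions of the `|W|` vertices of `f` add up to at
least `1`. Double counting the pairs `(g, u)` with `g u ∈ X` gives `|H| ≤ |W|·|X|`, while
minimality of `Y` gives `|H| ≥ |Y| = |W|·|X|`. Equality forces every vertex whose orbit meets `X`
to be heavy with fraction exactly `1/|W|`, which is the claim.
-/

open Finset MulAction

namespace MulAction

variable (G : Type*) {α : Type*} [Group G] [MulAction G α] [Fintype G] [DecidableEq α]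

lemma card_smul_smul_mem (s : Finset α) (h : G) (a : α) :
    #{g : G | g • h • a ∈ s} = #{g : G | g • a ∈ s} :=
  card_nbij' (· * h) (· * h⁻¹) (by intro g; simp [mul_smul]) (by intro g; simp [mul_smul])
    (by intro g; simp) (by intro g; simp)

variable {G}

lemma sum_card_smul_mem_of_smul_mem (s : Finset α) {t : Finset α}
    (ht : ∀ g : G, ∀ a ∈ t, g • a ∈ t) :
    ∑ a ∈ t, #{g : G | g • a ∈ s} = Fintype.card G * #(s ∩ t) := by
  have hfiber : ∀ g : G, #{a ∈ t | g • a ∈ s} = #(s ∩ t) := fun g =>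
    card_nbij' (g • ·) (g⁻¹ • ·)
      (fun a ha => by simp_all)
      (fun b hb => by simp_all [ht g⁻¹ b])
      (fun a _ => by simp) (fun b _ => by simp)
  simp_rw [card_filter]
  rw [sum_comm]
  simp_rw [← card_filter, hfiber, sum_const, card_univ, smul_eq_mul]

variable (G) [Fintype α]

def heavyPoints (s : Finset α) (k : ℕ) : Finset α :=
  {a | Fintype.card G ≤ k * #{g : G | g • a ∈ s}}

variable {G}

lemma smul_mem_heavyPoints_iff {s : Finset α} {k : ℕ} (h : G) (a : α) :
    h • a ∈ heavyPoints G s k ↔ a ∈ heavyPoints G s k := by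
  simp only [heavyPoints, mem_filter, mem_univ, true_and, card_smul_smul_mem]

lemma exists_mem_heavyPoints {ι : Type*} [Fintype ι] {s : Finset α} (p : ι → α)
    (hp : ∀ g : G, ∃ i, g • p i ∈ s) : ∃ i, p i ∈ heavyPoints G s (Fintype.card ι) := by
  classical
  have hι : (univ : Finset ι).Nonempty := univ_nonempty_iff.2 ⟨(hp 1).choose⟩
  have hunion : Fintype.card G ≤ ∑ i, #{g : G | g • p i ∈ s} :=
    calc Fintype.card G = #(univ.biUnion fun i => ({g : G | g • p i ∈ s} : Finset G)) := by
          rw [← card_univ]; congr 1; ext g; simpa using hp g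
      _ ≤ _ := card_biUnion_le
  by_contra! hlight
  simp only [heavyPoints, mem_filter, mem_univ, true_and, not_le] at hlight
  have : Fintype.card ι * Fintype.card G < Fintype.card ι * Fintype.card G :=
    calc Fintype.card ι * Fintype.card G ≤ ∑ i, Fintype.card ι * #{g : G | g • p i ∈ s} := by
          rw [← mul_sum]; exact Nat.mul_le_mul_left _ hunion
      _ < ∑ _i : ι, Fintype.card G := sum_lt_sum_of_nonempty hι fun i _ => hlight i
      _ = Fintype.card ι * Fintype.card G := by simp
  exact this.false

lemma card_eq_mul_of_le_card_heavyPoints {s : Finset α} {k : ℕ} (hk : 0 < k)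
    (hH : k * #s ≤ #(heavyPoints G s k)) {a : α} (ha : 0 < #{g : G | g • a ∈ s}) :
    Fintype.card G = k * #{g : G | g • a ∈ s} := by
  set H := heavyPoints G s k
  set f : α → ℕ := fun b => k * #{g : G | g • b ∈ s}
  have hheavy : ∀ b ∈ H, Fintype.card G ≤ f b := fun b hb => by
    simpa [H, heavyPoints] using hb
  have htotal : ∑ b, f b ≤ ∑ _b ∈ H, Fintype.card G :=
    calc ∑ b, f b = k * (Fintype.card G * #s) := by
          rw [← mul_sum, sum_card_smul_mem_of_smul_mem s (fun _ _ _ => mem_univ _), inter_univ]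
      _ ≤ #H * Fintype.card G := by nlinarith
      _ = _ := by simp
  have haH : a ∈ H := by
    by_contra haH
    have := sum_lt_sum_of_subset (f := f) (subset_univ H) (mem_univ a) haH (Nat.mul_pos hk ha)
      (fun _ _ _ => Nat.zero_le _)
    linarith [sum_le_sum hheavy]
  have hsum : ∑ _b ∈ H, Fintype.card G = ∑ b ∈ H, f b :=
    le_antisymm (sum_le_sum hheavy) (le_trans (sum_le_sum_of_subset (subset_univ H)) htotal)
  exact (sum_eq_sum_iff_of_le hheavy).1 hsum a haH

lemma card_orbit_eq_of_le_card_heavyPoints {s : Finset α} {k : ℕ} (hk : 0 < k)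
    (hH : k * #s ≤ #(heavyPoints G s k)) {a : α} (ha : (orbit G a ∩ s).Nonempty) :
    Nat.card (orbit G a) = k * Nat.card ↥(↑s ∩ orbit G a) := by
  classical
  set t := (orbit G a).toFinset
  have hpos : 0 < #{g : G | g • a ∈ s} := by
    obtain ⟨x, ⟨g, rfl⟩, hx⟩ := ha
    exact card_pos.2 ⟨g, by simpa using hx⟩
  have hconst : ∀ b ∈ t, #{g : G | g • b ∈ s} = #{g : G | g • a ∈ s} := by
    intro b hb
    obtain ⟨h, rfl⟩ := Set.mem_toFinset.1 hb
    exact card_smul_smul_mem G s h a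
  have hsum := sum_card_smul_mem_of_smul_mem s (t := t) (fun g b hb => by
    simpa [t] using mem_orbit_of_mem_orbit g (Set.mem_toFinset.1 hb))
  rw [sum_congr rfl hconst, sum_const, smul_eq_mul] at hsum
  have hG := card_eq_mul_of_le_card_heavyPoints hk hH hpos
  rw [Nat.card_eq_card_toFinset, Nat.card_eq_card_toFinset, Set.toFinset_inter, Finset.toFinset_coe]
  refine Nat.eq_of_mul_eq_mul_left (Fintype.card_pos (α := G)) ?_
  calc Fintype.card G * #t = k * (#t * #{g : G | g • a ∈ s}) := by rw [hG]; ring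
    _ = Fintype.card G * (k * #(s ∩ t)) := by rw [hsum]; ring

end MulAction

section

variable {V W : Type} {Γ : SimpleGraph V} {K : SimpleGraph W}

instance [Finite V] : Finite (Γ ≃g Γ) :=
  Finite.of_injective _ DFunLike.coe_injective

lemma autOrbit_eq_orbit (v : V) : autOrbit Γ v = orbit (Γ ≃g Γ) v := rfl

lemma autInvariant_of_forall_apply_mem_iff {S : Set V} (hS : ∀ (g : Γ ≃g Γ) v, g v ∈ S ↔ v ∈ S) :
    AutInvariant Γ S := by
  intro g
  ext v
  refine ⟨?_, fun hv => ⟨g.symm v, (hS g _).1 (by simpa using hv), by simp⟩⟩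
  rintro ⟨u, hu, rfl⟩
  exact (hS g u).2 hu

lemma KCover.nonempty {X : Set V} (hX : KCover K Γ X) : Nonempty W := by
  by_contra hW
  rw [not_nonempty_iff] at hW
  obtain ⟨w, -⟩ := hX ⟨isEmptyElim, fun {w} => isEmptyElim w⟩ (Function.injective_of_subsingleton _)
  exact isEmptyElim w

lemma KCover.exists_apply_mem {X : Set V} (hX : KCover K Γ X) {f : K →g Γ}
    (hf : Function.Injective f) (g : Γ ≃g Γ) : ∃ w, g (f w) ∈ X :=
  hX (g.toHom.comp f) (g.injective.comp hf)

end

theorem stmt7_general {W V : Type} [Fintype W] [Fintype V]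
    (K : SimpleGraph W) (Γ : SimpleGraph V) (X Y : Set V)
    (hX : KCover K Γ X)
    (hYmin : ∀ Y' : Set V, KCover K Γ Y' → AutInvariant Γ Y' → Nat.card Y ≤ Nat.card Y')
    (hcard : Nat.card Y = Nat.card X * Fintype.card W) :
    ∀ v : V, (autOrbit Γ v ∩ X).Nonempty →
      Nat.card (autOrbit Γ v) = Fintype.card W * Nat.card ↥(X ∩ autOrbit Γ v) := by
  classical
  intro v hv
  have := Fintype.ofFinite (Γ ≃g Γ)
  set H := heavyPoints (Γ ≃g Γ) X.toFinset (Fintype.card W)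
  have hHcov : KCover K Γ H := fun f hf =>
    exists_mem_heavyPoints f fun g => by simpa using hX.exists_apply_mem hf g
  have hHinv : AutInvariant Γ H :=
    autInvariant_of_forall_apply_mem_iff fun g v => smul_mem_heavyPoints_iff g v
  have hle : Fintype.card W * #X.toFinset ≤ #H := by
    have := hYmin H hHcov hHinv
    rwa [hcard, Nat.card_eq_card_toFinset X, Nat.card_eq_card_toFinset (H : Set V),
      Finset.toFinset_coe, mul_comm] at this
  rw [autOrbit_eq_orbit] at hv ⊢
  simpa using card_orbit_eq_of_le_card_heavyPoints (Fintype.card_pos_iff.2 hX.nonempty) hle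
    (by simpa using hv)

/-- If `X` is a minimum set meeting all copies of `K` in `Γ`, `Y` is a minimum invariant
such set, and `|Y| = |X|·|V(K)|`, then every orbit `V` meeting `X` satisfies
`|V| = |V(K)|·|X ∩ V|`. -/
theorem stmt7 {W V : Type} [Fintype W] [Fintype V]
    (K : SimpleGraph W) (Γ : SimpleGraph V) (X Y : Set V)
    (hX : KCover K Γ X)
    (hXmin : ∀ X' : Set V, KCover K Γ X' → Nat.card X ≤ Nat.card X')
    (hYcov : KCover K Γ Y) (hYinv : AutInvariant Γ Y)
    (hYmin : ∀ Y' : Set V, KCover K Γ Y' → AutInvariant Γ Y' → Nat.card Y ≤ Nat.card Y')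
    (hcard : Nat.card Y = Nat.card X * Fintype.card W) :
    ∀ v : V, (autOrbit Γ v ∩ X).Nonempty →
      Nat.card (autOrbit Γ v) = Fintype.card W * Nat.card ↥(X ∩ autOrbit Γ v) :=
  stmt7_general K Γ X Y hX hYmin hcard
end

section
/- Let Γ and K be finite graphs with Υ_sym(K,Γ) = |V(K)| · Υ(K,Γ), and let M ⊆ V(Γ) be a set with |M| = Υ(K,Γ) meeting every subgraph of Γ isomorphic to K. Then for every Aut(Γ)-orbit V of vertices: if some subgraph of Γ isomorphic to K has a vertex in V, then |V ∩ M| / |V| = 1/|V(K)|; otherwise |V ∩ M| / |V| = 0. -/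
/-- The vertex representativity `Υ(K, Γ)`. -/
noncomputable def upsilon {W V : Type} (K : SimpleGraph W) (Γ : SimpleGraph V) : ℕ :=
  sInf {m | ∃ X : Set V, X.Finite ∧ Nat.card X = m ∧ KCover K Γ X}

/-- The symmetric vertex representativity `Υ_sym(K, Γ)`. -/
noncomputable def upsilonSym {W V : Type} (K : SimpleGraph W) (Γ : SimpleGraph V) : ℕ :=
  sInf {m | ∃ X : Set V, X.Finite ∧ Nat.card X = m ∧ AutInvariant Γ X ∧ KCover K Γ X}

open MulAction Finset

namespace MulAction

variable (G : Type*) {α : Type*} [Group G] [MulAction G α] [Fintype G]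

open scoped Classical in
noncomputable def hitCount (M : Set α) (x : α) : ℕ := #{g : G | g • x ∈ M}

lemma hitCount_smul (M : Set α) (h : G) (x : α) : hitCount G M (h • x) = hitCount G M x := by
  unfold hitCount
  exact card_equiv (Equiv.mulRight h) (by simp [mul_smul])

lemma hitCount_of_mem_orbit (M : Set α) {x y : α} (hy : y ∈ orbit G x) :
    hitCount G M y = hitCount G M x := by
  obtain ⟨h, rfl⟩ := hy
  exact hitCount_smul G M h x

open scoped Classical in
lemma sum_hitCount (M : Set α) (S : Finset α) (hS : ∀ g : G, ∀ y ∈ S, g • y ∈ S) :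
    ∑ y ∈ S, hitCount G M y = Fintype.card G * #{y ∈ S | y ∈ M} := by
  have hperm : ∀ g : G, #{y ∈ S | g • y ∈ M} = #{y ∈ S | y ∈ M} := fun g =>
    card_nbij (g • ·) (fun y hy => by simp_all) (fun _ _ _ _ => smul_left_cancel g)
      (fun y hy => ⟨g⁻¹ • y, by simp_all⟩)
  simp only [hitCount, card_filter]
  rw [sum_comm]
  simp only [← card_filter, hperm, sum_const, card_univ, smul_eq_mul]

lemma hitCount_mul_card_orbit [Fintype α] (M : Set α) (x : α) :
    hitCount G M x * Nat.card (orbit G x) = Fintype.card G * Nat.card ↥(orbit G x ∩ M) := by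
  classical
  have h := sum_hitCount G M (orbit G x).toFinset fun g y hy => by
    simpa using mem_orbit_of_mem_orbit g (Set.mem_toFinset.1 hy)
  rw [sum_congr rfl fun y hy => hitCount_of_mem_orbit G M (Set.mem_toFinset.1 hy), sum_const,
    smul_eq_mul] at h
  rw [mul_comm, Nat.card_eq_card_toFinset, h, Nat.card_eq_card_toFinset, Set.toFinset_inter]
  congr 2
  ext y
  simp

lemma card_orbit_inter_div_card_orbit [Fintype α] {M : Set α} {x : α} {n : ℕ}
    (hx : n * hitCount G M x = Fintype.card G) :
    (Nat.card ↥(orbit G x ∩ M) : ℚ) / Nat.card (orbit G x) = 1 / n := by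
  have hn : n ≠ 0 := by
    rintro rfl
    exact Fintype.card_ne_zero (hx.symm.trans (zero_mul _))
  have hO : Nat.card (orbit G x) ≠ 0 :=
    (Nat.card_pos_iff.2 ⟨(nonempty_orbit x).to_subtype, inferInstance⟩).ne'
  have hcard : Nat.card ↥(orbit G x ∩ M) * n = Nat.card (orbit G x) := by
    refine Nat.eq_of_mul_eq_mul_left (Fintype.card_pos (α := G)) ?_
    calc Fintype.card G * (Nat.card ↥(orbit G x ∩ M) * n)
        = n * (hitCount G M x * Nat.card (orbit G x)) := by
          rw [hitCount_mul_card_orbit]; ring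
      _ = Fintype.card G * Nat.card (orbit G x) := by rw [← mul_assoc, hx]
  rw [div_eq_div_iff (by exact_mod_cast hO) (by exact_mod_cast hn), one_mul]
  exact_mod_cast hcard

lemma card_le_sum_hitCount {ι : Type*} [Fintype ι] (M : Set α) (x : ι → α)
    (hx : ∀ g : G, ∃ i, g • x i ∈ M) : Fintype.card G ≤ ∑ i, hitCount G M (x i) := by
  classical
  calc Fintype.card G = #(univ : Finset G) := rfl
    _ ≤ #(univ.biUnion fun i => ({g : G | g • x i ∈ M} : Finset G)) :=
        card_le_card fun g _ => by simpa using hx g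
    _ ≤ ∑ i, hitCount G M (x i) := card_biUnion_le

end MulAction

section Representativity

open SimpleGraph

variable {V W : Type} {Γ : SimpleGraph V} {K : SimpleGraph W}

instance : MulAction (Γ ≃g Γ) V where
  smul g v := g v
  one_smul _ := rfl
  mul_smul _ _ _ := rfl

lemma SimpleGraph.Iso.smul_def (g : Γ ≃g Γ) (v : V) : g • v = g v := rfl

instance inst_s8 [Finite V] : Finite (Γ ≃g Γ) := DFunLike.finite _

noncomputable instance [Fintype V] : Fintype (Γ ≃g Γ) := Fintype.ofFinite _

lemma orbit_eq_autOrbit (v : V) : orbit (Γ ≃g Γ) v = autOrbit Γ v := rfl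

lemma autInvariant_setOf {p : V → Prop} (hp : ∀ (g : Γ ≃g Γ) v, p (g v) ↔ p v) :
    AutInvariant Γ {v | p v} := by
  intro g
  ext v
  refine ⟨fun ⟨u, hu, huv⟩ => huv ▸ (hp g u).2 hu, fun hv => ⟨g.symm v, ?_, g.apply_symm_apply v⟩⟩
  exact (hp g _).1 (by rwa [g.apply_symm_apply])

lemma KCover.exists_smul_mem {M : Set V} (hM : KCover K Γ M) (f : K →g Γ)
    (hf : Function.Injective f) (g : Γ ≃g Γ) : ∃ w, g • f w ∈ M :=
  hM (g.toHom.comp f) (g.injective.comp hf)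

lemma upsilon_le [Finite V] {X : Set V} (hX : KCover K Γ X) : upsilon K Γ ≤ Nat.card X :=
  Nat.sInf_le ⟨X, X.toFinite, rfl, hX⟩

lemma upsilonSym_le [Finite V] {X : Set V} (hXinv : AutInvariant Γ X) (hX : KCover K Γ X) :
    upsilonSym K Γ ≤ Nat.card X :=
  Nat.sInf_le ⟨X, X.toFinite, rfl, hXinv, hX⟩

lemma KCover.inter_eq_empty_of_card_eq_upsilon [Finite V] {M : Set V} (hM : KCover K Γ M)
    (hMcard : Nat.card M = upsilon K Γ) {S : Set V}
    (hS : ∀ f : K →g Γ, Function.Injective f → ∀ w, f w ∉ S) : S ∩ M = ∅ := by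
  by_contra hne
  obtain ⟨y, hyS, hyM⟩ := Set.nonempty_iff_ne_empty.2 hne
  have hcover : KCover K Γ (M \ S) := fun f hf =>
    let ⟨w, hw⟩ := hM f hf
    ⟨w, hw, hS f hf w⟩
  have hlt : Nat.card ↥(M \ S) < Nat.card M := by
    simp only [Nat.card_coe_set_eq]
    exact Set.ncard_lt_ncard (Set.sdiff_ssubset_left_iff.2 ⟨y, hyM, hyS⟩)
  exact (upsilon_le hcover).not_gt (hMcard ▸ hlt)

variable [Fintype V] [Fintype W] {M : Set V}

lemma KCover.card_le_sum_hitCount (hM : KCover K Γ M) (f : K →g Γ)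
    (hf : Function.Injective f) :
    Fintype.card (Γ ≃g Γ) ≤ ∑ w, hitCount (Γ ≃g Γ) M (f w) :=
  MulAction.card_le_sum_hitCount _ M _ (hM.exists_smul_mem f hf)

lemma card_mul_hitCount_le (h : upsilonSym K Γ = Fintype.card W * upsilon K Γ)
    (hM : KCover K Γ M) (hMcard : Nat.card M = upsilon K Γ) (x : V) :
    Fintype.card W * hitCount (Γ ≃g Γ) M x ≤ Fintype.card (Γ ≃g Γ) := by
  classical
  by_contra! hx
  set n := Fintype.card W
  set N := Fintype.card (Γ ≃g Γ)
  let Y : Set V := {y | N ≤ n * hitCount (Γ ≃g Γ) M y}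
  have hYinv : AutInvariant Γ Y :=
    autInvariant_setOf fun g y => by rw [← Iso.smul_def, hitCount_smul]
  have hYcover : KCover K Γ Y := by
    intro f hf
    by_contra! hfY
    obtain ⟨w₀, -⟩ := hM f hf
    have : n * N < n * N := calc
      n * N ≤ n * ∑ w, hitCount (Γ ≃g Γ) M (f w) :=
        Nat.mul_le_mul_left n (hM.card_le_sum_hitCount f hf)
      _ = ∑ w, n * hitCount (Γ ≃g Γ) M (f w) := mul_sum ..
      _ < ∑ _w : W, N := sum_lt_sum_of_nonempty ⟨w₀, mem_univ _⟩ fun w _ => not_le.1 (hfY w)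
      _ = n * N := by simp [n]
    exact this.false
  have hYcard : n * Nat.card M ≤ Nat.card Y := hMcard ▸ h ▸ upsilonSym_le hYinv hYcover
  have : N * Nat.card Y < N * (n * Nat.card M) := calc
    N * Nat.card Y = ∑ _y ∈ Y.toFinset, N := by simp [mul_comm]
    _ < ∑ y ∈ Y.toFinset, n * hitCount (Γ ≃g Γ) M y :=
      sum_lt_sum (fun y hy => by simpa [Y] using hy) ⟨x, by simp [Y, hx.le], hx⟩
    _ ≤ ∑ y, n * hitCount (Γ ≃g Γ) M y := sum_le_sum_of_subset (subset_univ _)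
    _ = N * (n * Nat.card M) := by
      rw [← mul_sum, sum_hitCount _ M univ (by simp)]
      simp only [Nat.card_eq_fintype_card, Fintype.card_ofFinset]
      ring
  exact this.not_ge (Nat.mul_le_mul_left N hYcard)

lemma card_mul_hitCount_eq_of_injective (h : upsilonSym K Γ = Fintype.card W * upsilon K Γ)
    (hM : KCover K Γ M) (hMcard : Nat.card M = upsilon K Γ) (f : K →g Γ)
    (hf : Function.Injective f) (w : W) :
    Fintype.card W * hitCount (Γ ≃g Γ) M (f w) = Fintype.card (Γ ≃g Γ) := by
  have hle : ∀ w ∈ univ, Fintype.card W * hitCount (Γ ≃g Γ) M (f w) ≤ Fintype.card (Γ ≃g Γ) :=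
    fun w _ => card_mul_hitCount_le h hM hMcard (f w)
  refine (sum_eq_sum_iff_of_le hle).1 (le_antisymm (sum_le_sum hle) ?_) w (mem_univ w)
  rw [sum_const, card_univ, smul_eq_mul, ← mul_sum]
  exact Nat.mul_le_mul_left _ (hM.card_le_sum_hitCount f hf)

end Representativity

/-- Proposition 2.1: if `Υ_sym(K,Γ) = |V(K)|·Υ(K,Γ)` and `M` is a minimum-size cover,
then `|V ∩ M|/|V| = 1/|V(K)|` for every orbit `V` met by a copy of `K`, and
`|V ∩ M|/|V| = 0` for the remaining orbits. -/
theorem stmt8 {W V : Type} [Fintype W] [Fintype V]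
    (K : SimpleGraph W) (Γ : SimpleGraph V)
    (h : upsilonSym K Γ = Fintype.card W * upsilon K Γ)
    (M : Set V) (hM : KCover K Γ M) (hMcard : Nat.card M = upsilon K Γ) :
    ∀ v : V,
      ((∃ f : K →g Γ, Function.Injective f ∧ ∃ w : W, f w ∈ autOrbit Γ v) →
        (Nat.card ↥(autOrbit Γ v ∩ M) : ℚ) / Nat.card (autOrbit Γ v)
          = 1 / Fintype.card W) ∧
      ((¬ ∃ f : K →g Γ, Function.Injective f ∧ ∃ w : W, f w ∈ autOrbit Γ v) →
        (Nat.card ↥(autOrbit Γ v ∩ M) : ℚ) / Nat.card (autOrbit Γ v) = 0) := by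
  intro v
  constructor
  · rintro ⟨f, hf, w, hw⟩
    rw [← orbit_eq_autOrbit] at hw ⊢
    have hv := card_mul_hitCount_eq_of_injective h hM hMcard f hf w
    rw [hitCount_of_mem_orbit _ M hw] at hv
    exact card_orbit_inter_div_card_orbit _ hv
  · intro hno
    rw [hM.inter_eq_empty_of_card_eq_upsilon hMcard fun f hf w hw => hno ⟨f, hf, w, hw⟩]
    simp
end

section
/- Let Γ be a finite connected graph and K a finite connected graph having a vertex of degree 1, such that Υ_sym(K,Γ) = |V(K)| · Υ(K,Γ) > 0. Then for every Aut(Γ)-orbit V of vertices of Γ, the induced subgraph Γ(V) contains a subgraph isomorphic to K. -/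
/-!
Fix a minimum cover `X` of the copies of `K`, let `n = |V(K)|`, and let `d a` be the proportion
of automorphisms moving the vertex `a` into `X`. Every translate of a copy `f` of `K` meets `X`,
so averaging over `Aut Γ` gives `∑_w d (f w) ≥ 1`. Hence the union `T` of the orbits on which
`n d ≥ 1` is an invariant cover, and `Υ_sym ≤ |T| ≤ n |X ∩ T| ≤ n Υ = Υ_sym`. Equality forces
`n d = 1` on `T`, so `n d ≤ 1` everywhere, and then every copy of `K` lies inside `T`. As `T` is a
smallest invariant cover, removing one of its orbits uncovers a copy, which must lie in that
orbit. Finally `T` is all of `Γ`: at an edge `t z` leaving `T`, move a copy so that the neighbour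
of the pendant vertex lands on `t` and re-hang the pendant vertex at `z`; this copy leaves `T`.
-/

open Finset Function

section HitDensity

variable {G α : Type*} [Group G] [MulAction G α] [DecidableEq α]

lemma card_filter_smul_mem_eq_card_inter {S : Finset α} (hS : ∀ g : G, ∀ a ∈ S, g • a ∈ S)
    (X : Finset α) (g : G) : #{a ∈ S | g • a ∈ X} = #(S ∩ X) :=
  card_equiv (MulAction.toPerm g) fun a => by
    simp only [mem_filter, mem_inter, MulAction.toPerm_apply]
    exact ⟨fun ⟨ha, haX⟩ => ⟨hS g a ha, haX⟩,
      fun ⟨ha, haX⟩ => ⟨by simpa using hS g⁻¹ _ ha, haX⟩⟩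

variable (G) [Fintype G]

/-- By orbit–stabilizer this equals `#(X ∩ G • a) / #(G • a)`. -/
noncomputable def hitDensity (X : Finset α) (a : α) : ℚ :=
  #{g : G | g • a ∈ X} / Fintype.card G

variable {G}

lemma hitDensity_smul (X : Finset α) (h : G) (a : α) :
    hitDensity G X (h • a) = hitDensity G X a := by
  unfold hitDensity
  congr 2
  exact card_equiv (Equiv.mulRight h) fun g => by simp [mul_smul]

lemma sum_hitDensity_eq_card_inter {S : Finset α} (hS : ∀ g : G, ∀ a ∈ S, g • a ∈ S)
    (X : Finset α) : ∑ a ∈ S, hitDensity G X a = #(S ∩ X) := by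
  have hcount : ∑ a ∈ S, #{g : G | g • a ∈ X} = Fintype.card G * #(S ∩ X) := by
    change ∑ a ∈ S, #(bipartiteAbove (fun a (g : G) => g • a ∈ X) univ a) = _
    rw [sum_card_bipartiteAbove_eq_sum_card_bipartiteBelow (fun a (g : G) => g • a ∈ X)]
    simp [bipartiteBelow, card_filter_smul_mem_eq_card_inter hS]
  simp only [hitDensity, ← sum_div]
  rw [div_eq_iff (by positivity)]
  exact_mod_cast hcount.trans (mul_comm _ _)

lemma sum_mul_hitDensity_le {S : Finset α} (hS : ∀ g : G, ∀ a ∈ S, g • a ∈ S) (X : Finset α)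
    (n : ℕ) : ∑ a ∈ S, n * hitDensity G X a ≤ n * #X := by
  rw [← mul_sum, sum_hitDensity_eq_card_inter hS]
  gcongr
  exact inter_subset_right

end HitDensity

section Copies

variable {W V : Type} {K : SimpleGraph W} {Γ : SimpleGraph V}

noncomputable instance [Finite V] : Fintype (Γ ≃g Γ) :=
  haveI : Finite (Γ ≃g Γ) := DFunLike.finite _
  Fintype.ofFinite _

lemma mem_autOrbit_self (v : V) : v ∈ autOrbit Γ v :=
  ⟨1, rfl⟩

lemma apply_mem_autOrbit_iff (g : Γ ≃g Γ) {a t : V} :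
    g a ∈ autOrbit Γ t ↔ a ∈ autOrbit Γ t :=
  ⟨fun ⟨h, hh⟩ => ⟨g⁻¹ * h, by simp [RelIso.mul_apply, hh]⟩,
    fun ⟨h, hh⟩ => ⟨g * h, by simp [RelIso.mul_apply, hh]⟩⟩

lemma autInvariant_of_forall_mem {S : Set V} (hS : ∀ g : Γ ≃g Γ, ∀ a ∈ S, g a ∈ S) :
    AutInvariant Γ S := fun g =>
  (Set.image_subset_iff.2 (hS g)).antisymm
    fun a ha => ⟨g.symm a, hS g.symm a ha, g.apply_symm_apply a⟩

lemma upsilonSym_le_card {S : Finset V} (hinv : AutInvariant Γ S) (hS : KCover K Γ S) :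
    upsilonSym K Γ ≤ #S :=
  Nat.sInf_le ⟨S, S.finite_toSet, by simp, hinv, hS⟩

lemma exists_kCover_card_eq_upsilon [Nonempty W] [Finite V] (K : SimpleGraph W)
    (Γ : SimpleGraph V) : ∃ X : Finset V, KCover K Γ X ∧ #X = upsilon K Γ := by
  obtain ⟨Y, hY, hYcard, hYcover⟩ := Nat.sInf_mem (s := {m | ∃ X : Set V, X.Finite ∧
      Nat.card X = m ∧ KCover K Γ X})
    ⟨_, Set.univ, Set.finite_univ, rfl, fun _ _ => ⟨Classical.arbitrary W, trivial⟩⟩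
  exact ⟨hY.toFinset, by simpa using hYcover, by
    rw [← Nat.card_eq_card_finite_toFinset]; exact hYcard⟩

lemma exists_injective_hom_induce {f : K →g Γ} (hf : Injective f) {s : Set V}
    (hs : ∀ w, f w ∈ s) : ∃ f' : K →g Γ.induce s, Injective f' :=
  ⟨⟨fun w => ⟨f w, hs w⟩, f.map_adj⟩, fun _ _ h => hf (congrArg Subtype.val h)⟩

lemma exists_injective_hom_map_pendant {w₀ w₁ : W} (hw₀ : K.neighborSet w₀ ⊆ {w₁})
    {f : K →g Γ} (hf : Injective f) {z : V} (hz : Γ.Adj (f w₁) z) (hzf : z ∉ Set.range f) :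
    ∃ f' : K →g Γ, Injective f' ∧ f' w₀ = z := by
  classical
  have hadj : ∀ {a b}, K.Adj a b → a = w₀ → b = w₁ ∧ b ≠ w₀ := fun hab ha => by
    subst ha; exact ⟨hw₀ hab, hab.ne'⟩
  refine ⟨⟨update f w₀ z, fun {a b} hab => ?_⟩, fun a b hab => ?_, update_self w₀ z (⇑f)⟩
  · by_cases ha : a = w₀
    · obtain ⟨rfl, hb⟩ := hadj hab ha
      simpa [ha, hb] using hz.symm
    by_cases hb : b = w₀
    · obtain ⟨rfl, -⟩ := hadj hab.symm hb
      simpa [ha, hb] using hz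
    simpa [ha, hb] using f.map_adj hab
  · change update f w₀ z a = update f w₀ z b at hab
    by_cases ha : a = w₀ <;> by_cases hb : b = w₀
    · exact ha.trans hb.symm
    · rw [ha, update_self, update_of_ne hb] at hab
      exact absurd ⟨b, hab.symm⟩ hzf
    · rw [hb, update_self, update_of_ne ha] at hab
      exact absurd ⟨a, hab⟩ hzf
    · rw [update_of_ne ha, update_of_ne hb] at hab
      exact hf hab

lemma KCover.one_le_sum_hitDensity [Fintype W] [Finite V] [DecidableEq V] {X : Finset V}
    (hX : KCover K Γ X) {f : K →g Γ} (hf : Injective f) :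
    1 ≤ ∑ w, hitDensity (Γ ≃g Γ) X (f w) := by
  have hcount : Fintype.card (Γ ≃g Γ) ≤ ∑ w, #{g : Γ ≃g Γ | g • f w ∈ X} := by
    calc Fintype.card (Γ ≃g Γ) = ∑ _g : Γ ≃g Γ, 1 := card_eq_sum_ones _
      _ ≤ ∑ g : Γ ≃g Γ, #{w | g • f w ∈ X} := sum_le_sum fun g _ => by
          obtain ⟨w, hw⟩ := hX (g.toEmbedding.toHom.comp f) (g.injective.comp hf)
          exact card_pos.2 ⟨w, by simpa using hw⟩
      _ = ∑ w, #{g : Γ ≃g Γ | g • f w ∈ X} :=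
          sum_card_bipartiteAbove_eq_sum_card_bipartiteBelow (fun g w => g • f w ∈ X)
  simp only [hitDensity, ← sum_div]
  rw [le_div_iff₀ (by positivity), one_mul]
  exact_mod_cast hcount

lemma KCover.card_mul_hitDensity_eq_one [Fintype W] [Finite V] [DecidableEq V] {X : Finset V}
    (hX : KCover K Γ X) (hd : ∀ a, Fintype.card W * hitDensity (Γ ≃g Γ) X a ≤ 1)
    {f : K →g Γ} (hf : Injective f) (w : W) :
    Fintype.card W * hitDensity (Γ ≃g Γ) X (f w) = 1 := by
  have hsum : ∑ w, (Fintype.card W * hitDensity (Γ ≃g Γ) X (f w)) = ∑ _w : W, 1 := by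
    refine le_antisymm (sum_le_sum fun w _ => hd (f w)) ?_
    rw [← mul_sum, sum_const, card_univ, nsmul_one]
    exact le_mul_of_one_le_right (by positivity) (hX.one_le_sum_hitDensity hf)
  exact ((sum_eq_sum_iff_of_le fun w _ => hd (f w)).1 hsum) w (mem_univ w)

theorem exists_autInvariant_card_eq_upsilonSym_forall_copy_mem [Fintype W] [Nonempty W]
    [Fintype V] (h : upsilonSym K Γ = Fintype.card W * upsilon K Γ) :
    ∃ T : Finset V, (∀ g : Γ ≃g Γ, ∀ a ∈ T, g a ∈ T) ∧ #T = upsilonSym K Γ ∧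
      ∀ f : K →g Γ, Injective f → ∀ w, f w ∈ T := by
  classical
  obtain ⟨X, hX, hXcard⟩ := exists_kCover_card_eq_upsilon K Γ
  set n := Fintype.card W
  set d := hitDensity (Γ ≃g Γ) X
  set T : Finset V := {a | (1 : ℚ) ≤ n * d a}
  have hTinv : ∀ g : Γ ≃g Γ, ∀ a ∈ T, g a ∈ T := fun g a ha => by
    simpa [T, d, ← RelIso.smul_def, hitDensity_smul] using ha
  have hTcover : KCover K Γ T := fun f hf => by
    have hsum : ∑ _w : W, (n : ℚ)⁻¹ ≤ ∑ w, d (f w) := by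
      simpa [n] using hX.one_le_sum_hitDensity hf
    obtain ⟨w, -, hw⟩ := exists_le_of_sum_le univ_nonempty hsum
    exact ⟨w, by simpa [T] using (inv_le_iff_one_le_mul₀' (by positivity)).1 hw⟩
  have hdense : ∀ a ∈ T, (1 : ℚ) ≤ n * d a := fun a ha => (mem_filter.1 ha).2
  have hTsum := sum_mul_hitDensity_le hTinv X n
  have hTcard : #T = upsilonSym K Γ := by
    refine le_antisymm ?_ (upsilonSym_le_card (autInvariant_of_forall_mem hTinv) hTcover)
    have : (#T : ℚ) ≤ n * #X := by
      simpa using (sum_le_sum hdense).trans hTsum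
    rw [h, ← hXcard]
    exact_mod_cast this
  have hTeq : ∀ a ∈ T, 1 = n * d a := by
    refine (sum_eq_sum_iff_of_le hdense).1 (le_antisymm (sum_le_sum hdense) ?_)
    simp only [sum_const, nsmul_eq_mul, mul_one]
    exact_mod_cast hTsum.trans (by rw [hTcard, h, hXcard]; norm_cast)
  have hd : ∀ a, n * d a ≤ 1 := fun a => by
    by_cases ha : a ∈ T
    · exact (hTeq a ha).ge
    · simpa [T] using (not_le.1 (by simpa [T] using ha)).le
  exact ⟨T, hTinv, hTcard, fun f hf w => by
    simpa [T] using (hX.card_mul_hitDensity_eq_one hd hf w).ge⟩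

lemma exists_copy_subset_autOrbit {T : Finset V} (hTinv : ∀ g : Γ ≃g Γ, ∀ a ∈ T, g a ∈ T)
    (hTcard : #T ≤ upsilonSym K Γ) (hcopies : ∀ f : K →g Γ, Injective f → ∀ w, f w ∈ T)
    {t : V} (ht : t ∈ T) : ∃ f : K →g Γ, Injective f ∧ ∀ w, f w ∈ autOrbit Γ t := by
  classical
  set S : Finset V := {a ∈ T | a ∉ autOrbit Γ t}
  have hSinv : AutInvariant Γ S := autInvariant_of_forall_mem fun g a ha => by
    simp only [S, coe_filter, Set.mem_ofPred_eq, apply_mem_autOrbit_iff] at ha ⊢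
    exact ⟨hTinv g a ha.1, ha.2⟩
  have hSlt : #S < upsilonSym K Γ :=
    (card_lt_card (filter_ssubset.2 ⟨t, ht, not_not.2 (mem_autOrbit_self t)⟩)).trans_le hTcard
  have hS : ¬ KCover K Γ S := fun hS => (upsilonSym_le_card hSinv hS).not_gt hSlt
  simp only [KCover, not_forall, not_exists] at hS
  obtain ⟨f, hf, hfS⟩ := hS
  exact ⟨f, hf, fun w => by simpa [S, hcopies f hf w] using hfS w⟩

lemma eq_univ_of_forall_copy_mem (hΓ : Γ.Connected) {w₀ w₁ : W}
    (hw₀ : K.neighborSet w₀ ⊆ {w₁}) {T : Set V} (hT : T.Nonempty)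
    (hcopies : ∀ f : K →g Γ, Injective f → ∀ w, f w ∈ T)
    (hrich : ∀ t ∈ T, ∃ f : K →g Γ, Injective f ∧ f w₁ ∈ autOrbit Γ t) : T = Set.univ := by
  refine Set.eq_univ_of_forall fun v => by_contra fun hv => ?_
  obtain ⟨x, hx⟩ := hT
  obtain ⟨d, -, ht, hz⟩ := (hΓ.preconnected x v).some.exists_boundary_dart T hx hv
  obtain ⟨f, hf, g, hg⟩ := hrich d.fst ht
  let f' : K →g Γ := g.symm.toEmbedding.toHom.comp f
  have hf' : Injective f' := g.symm.injective.comp hf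
  have hf'w₁ : f' w₁ = d.fst := by simp [f', ← hg]
  obtain ⟨f'', hf'', hf''w₀⟩ := exists_injective_hom_map_pendant hw₀ hf' (hf'w₁ ▸ d.adj)
    fun ⟨w, hw⟩ => hz (hw ▸ hcopies f' hf' w)
  exact hz (hf''w₀ ▸ hcopies f'' hf'' w₀)

end Copies

theorem stmt9_general {W V : Type} [Fintype W] [Fintype V]
    (K : SimpleGraph W) (Γ : SimpleGraph V)
    (hΓ : Γ.Connected)
    (hpendant : ∃ w : W, Nat.card (K.neighborSet w) = 1)
    (h : upsilonSym K Γ = Fintype.card W * upsilon K Γ)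
    (hpos : 0 < upsilonSym K Γ) :
    ∀ v : V, ∃ f : K →g Γ.induce (autOrbit Γ v), Function.Injective f := by
  obtain ⟨w₀, hw₀⟩ := hpendant
  obtain ⟨w₁, hw₁⟩ : ∃ w₁, K.neighborSet w₀ = {w₁} := by
    rwa [Nat.card_coe_set_eq, Set.ncard_eq_one] at hw₀
  have : Nonempty W := ⟨w₀⟩
  obtain ⟨T, hTinv, hTcard, hcopies⟩ := exists_autInvariant_card_eq_upsilonSym_forall_copy_mem h
  have hrich : ∀ t ∈ T, ∃ f : K →g Γ, Injective f ∧ ∀ w, f w ∈ autOrbit Γ t :=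
    fun t ht => exists_copy_subset_autOrbit hTinv hTcard.le hcopies ht
  have hTuniv : (T : Set V) = Set.univ :=
    eq_univ_of_forall_copy_mem hΓ hw₁.subset
      (by simpa [card_pos] using hpos.trans_eq hTcard.symm) hcopies
      fun t ht => (hrich t ht).imp fun f hf => ⟨hf.1, hf.2 w₁⟩
  intro v
  obtain ⟨f, hf, hfv⟩ := hrich v (by simp [← mem_coe, hTuniv])
  exact exists_injective_hom_induce hf hfv

/-- Theorem 2.2: if `Γ` is connected, `K` is connected with a pendant vertex, and
`Υ_sym(K,Γ) = |V(K)|·Υ(K,Γ) > 0`, then the subgraph of `Γ` induced by each orbit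
contains a subgraph isomorphic to `K`. -/
theorem stmt9 {W V : Type} [Fintype W] [Fintype V]
    (K : SimpleGraph W) (Γ : SimpleGraph V)
    (hΓ : Γ.Connected) (hK : K.Connected)
    (hpendant : ∃ w : W, Nat.card (K.neighborSet w) = 1)
    (h : upsilonSym K Γ = Fintype.card W * upsilon K Γ)
    (hpos : 0 < upsilonSym K Γ) :
    ∀ v : V, ∃ f : K →g Γ.induce (autOrbit Γ v), Function.Injective f :=
  stmt9_general K Γ hΓ hpendant h hpos
end

section
/- Let Γ be a finite graph, let A and B be two Aut(Γ)-orbits of vertices with at least one edge between A and B, and let S_1 ⊆ A. Let S_2 ⊆ B be the set of vertices of B adjacent to at least one vertex of S_1. Then |S_2| ≥ |S_1| · |B| / |A|. -/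
lemma autOrbit_map {V : Type} {Γ : SimpleGraph V} {v : V} (g : Γ ≃g Γ) {w : V}
    (hw : w ∈ autOrbit Γ v) : g w ∈ autOrbit Γ v := by
  obtain ⟨h, rfl⟩ := hw
  exact ⟨h.trans g, rfl⟩

lemma exists_iso_of_mem {V : Type} {Γ : SimpleGraph V} {v x y : V}
    (hx : x ∈ autOrbit Γ v) (hy : y ∈ autOrbit Γ v) : ∃ g : Γ ≃g Γ, g x = y := by
  obtain ⟨g, rfl⟩ := hx
  obtain ⟨h, rfl⟩ := hy
  exact ⟨g.symm.trans h, by simp⟩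

/-- Vertices in the same orbit have the same number of neighbours in any orbit. -/
lemma deg_const {V : Type} [Fintype V] {Γ : SimpleGraph V} {a₀ : V} (b₀ : V) {x y : V}
    [DecidableEq V] [DecidableRel Γ.Adj] [∀ v : V, Fintype (autOrbit Γ v)]
    (hx : x ∈ autOrbit Γ a₀) (hy : y ∈ autOrbit Γ a₀) :
    ((autOrbit Γ b₀).toFinset.filter (Γ.Adj x)).card =
      ((autOrbit Γ b₀).toFinset.filter (Γ.Adj y)).card := by
  obtain ⟨g, hg⟩ := exists_iso_of_mem hx hy
  refine Finset.card_bij (fun b _ => g b) ?_ ?_ ?_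
  · intro b hb
    simp only [Finset.mem_filter, Set.mem_toFinset] at hb ⊢
    refine ⟨autOrbit_map g hb.1, ?_⟩
    rw [← hg]
    exact g.map_adj_iff.mpr hb.2
  · intro b₁ h₁ b₂ h₂ h
    exact g.injective h
  · intro b hb
    simp only [Finset.mem_filter, Set.mem_toFinset] at hb
    refine ⟨g.symm b, ?_, by simp⟩
    simp only [Finset.mem_filter, Set.mem_toFinset]
    refine ⟨autOrbit_map g.symm hb.1, ?_⟩
    have : Γ.Adj (g x) b := hg ▸ hb.2
    have := g.symm.map_adj_iff.mpr this
    simpa using this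

/-- Lemma 2.2 of [T22]: if `A` and `B` are orbits joined by at least one edge and
`S₁ ⊆ A`, then the set `S₂` of vertices of `B` adjacent to `S₁` satisfies
`|S₂| ≥ |S₁|·|B|/|A|`. -/
theorem stmt13 {V : Type} [Fintype V] (Γ : SimpleGraph V) (A B : Set V)
    (hA : ∃ a, A = autOrbit Γ a) (hB : ∃ b, B = autOrbit Γ b)
    (hedge : ∃ a ∈ A, ∃ b ∈ B, Γ.Adj a b)
    (S₁ : Set V) (hS₁ : S₁ ⊆ A) :
    (Nat.card S₁ * Nat.card B : ℚ) / Nat.card A ≤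
      Nat.card ↥{b ∈ B | ∃ a ∈ S₁, Γ.Adj a b} := by
  classical
  obtain ⟨a₀, rfl⟩ := hA
  obtain ⟨b₀, rfl⟩ := hB
  obtain ⟨a₁, ha₁, b₁, hb₁, hab⟩ := hedge
  set FA := (autOrbit Γ a₀).toFinset with hFA
  set FB := (autOrbit Γ b₀).toFinset with hFB
  set FS := S₁.toFinset with hFS
  set S₂ : Set V := {b ∈ autOrbit Γ b₀ | ∃ a ∈ S₁, Γ.Adj a b} with hS₂
  set FS₂ := S₂.toFinset with hFS₂
  set d₀ := (FB.filter (Γ.Adj a₁)).card with hd₀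
  set e₀ := (FA.filter (fun a => Γ.Adj a b₁)).card with he₀
  -- constancy of degrees on the orbits
  have hd : ∀ a ∈ autOrbit Γ a₀, (FB.filter (Γ.Adj a)).card = d₀ :=
    fun a ha => deg_const b₀ ha ha₁
  have he : ∀ b ∈ autOrbit Γ b₀, (FA.filter (fun a => Γ.Adj a b)).card = e₀ := by
    intro b hb
    have h1 : ∀ b : V, (FA.filter (fun a => Γ.Adj a b)).card = (FA.filter (Γ.Adj b)).card := by
      intro b
      congr 1
      apply Finset.filter_congr
      intro a _
      simp [Γ.adj_comm]
    rw [he₀, h1 b, h1 b₁]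
    exact deg_const a₀ hb hb₁
  -- positivity
  have hd₀pos : 0 < d₀ := by
    rw [hd₀]
    exact Finset.card_pos.mpr ⟨b₁, Finset.mem_filter.mpr ⟨Set.mem_toFinset.mpr hb₁, hab⟩⟩
  have he₀pos : 0 < e₀ := by
    rw [he₀]
    exact Finset.card_pos.mpr ⟨a₁, Finset.mem_filter.mpr ⟨Set.mem_toFinset.mpr ha₁, hab⟩⟩
  have hFApos : 0 < FA.card := by
    exact Finset.card_pos.mpr ⟨a₀, Set.mem_toFinset.mpr ⟨RelIso.refl _, rfl⟩⟩
  have hFSsub : FS ⊆ FA := by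
    intro a ha
    exact Set.mem_toFinset.mpr (hS₁ (Set.mem_toFinset.mp ha))
  have hFS₂sub : FS₂ ⊆ FB := by
    intro b hb
    exact Set.mem_toFinset.mpr (Set.mem_toFinset.mp hb).1
  -- double counting: |A| d₀ = |B| e₀
  have hcount : FA.card * d₀ = FB.card * e₀ := by
    have := Finset.sum_comm (s := FA) (t := FB)
      (f := fun a b => if Γ.Adj a b then 1 else 0)
    calc FA.card * d₀ = ∑ a ∈ FA, (FB.filter (Γ.Adj a)).card := by
          rw [Finset.sum_congr rfl (fun a ha => hd a (Set.mem_toFinset.mp ha)),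
            Finset.sum_const, smul_eq_mul, mul_comm]
      _ = ∑ a ∈ FA, ∑ b ∈ FB, if Γ.Adj a b then 1 else 0 := by
          refine Finset.sum_congr rfl fun a _ => ?_
          exact Finset.card_filter _ _
      _ = ∑ b ∈ FB, ∑ a ∈ FA, if Γ.Adj a b then 1 else 0 := this
      _ = ∑ b ∈ FB, (FA.filter (fun a => Γ.Adj a b)).card := by
          refine Finset.sum_congr rfl fun b _ => ?_
          exact (Finset.card_filter _ _).symm
      _ = FB.card * e₀ := by
          rw [Finset.sum_congr rfl (fun b hb => he b (Set.mem_toFinset.mp hb)),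
            Finset.sum_const, smul_eq_mul, mul_comm]
  -- edges from S₁: at least |S₁| d₀, at most |S₂| e₀
  have hmain : FS.card * d₀ ≤ FS₂.card * e₀ := by
    have h1 : FS.card * d₀ = ∑ b ∈ FB, (FS.filter (fun a => Γ.Adj a b)).card := by
      calc FS.card * d₀ = ∑ a ∈ FS, (FB.filter (Γ.Adj a)).card := by
            rw [Finset.sum_congr rfl
              (fun a ha => hd a (hS₁ (Set.mem_toFinset.mp ha))),
              Finset.sum_const, smul_eq_mul, mul_comm]
        _ = ∑ a ∈ FS, ∑ b ∈ FB, if Γ.Adj a b then 1 else 0 := by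
            refine Finset.sum_congr rfl fun a _ => ?_
            exact Finset.card_filter _ _
        _ = ∑ b ∈ FB, ∑ a ∈ FS, if Γ.Adj a b then 1 else 0 :=
            Finset.sum_comm
        _ = ∑ b ∈ FB, (FS.filter (fun a => Γ.Adj a b)).card := by
            refine Finset.sum_congr rfl fun b _ => ?_
            exact (Finset.card_filter _ _).symm
    rw [h1]
    have h2 : ∀ b ∈ FB, (FS.filter (fun a => Γ.Adj a b)).card ≤
        if b ∈ FS₂ then e₀ else 0 := by
      intro b hb
      by_cases hbS : b ∈ FS₂
      · simp only [hbS, if_true]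
        rw [← he b (Set.mem_toFinset.mp hb)]
        exact Finset.card_le_card (Finset.filter_subset_filter _ hFSsub)
      · simp only [hbS, if_false, Nat.le_zero, Finset.card_eq_zero]
        rw [Finset.filter_eq_empty_iff]
        intro a ha hadj
        exact hbS (Set.mem_toFinset.mpr
          ⟨Set.mem_toFinset.mp hb, a, Set.mem_toFinset.mp ha, hadj⟩)
    calc ∑ b ∈ FB, (FS.filter (fun a => Γ.Adj a b)).card
        ≤ ∑ b ∈ FB, (if b ∈ FS₂ then e₀ else 0) := Finset.sum_le_sum h2
      _ = ∑ b ∈ FB.filter (· ∈ FS₂), e₀ := (Finset.sum_filter _ _).symm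
      _ = (FB.filter (· ∈ FS₂)).card * e₀ := by
          rw [Finset.sum_const, smul_eq_mul, mul_comm]
      _ = FS₂.card * e₀ := by
          rw [Finset.filter_mem_eq_inter, Finset.inter_eq_right.mpr hFS₂sub]
  -- the key natural-number inequality
  have hkey : FS.card * FB.card ≤ FS₂.card * FA.card := by
    have h : FS.card * FB.card * e₀ ≤ FS₂.card * FA.card * e₀ := by
      calc FS.card * FB.card * e₀ = FS.card * (FB.card * e₀) := by ring
        _ = FS.card * (FA.card * d₀) := by rw [hcount]
        _ = FA.card * (FS.card * d₀) := by ring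
        _ ≤ FA.card * (FS₂.card * e₀) := Nat.mul_le_mul_left _ hmain
        _ = FS₂.card * FA.card * e₀ := by ring
    exact Nat.le_of_mul_le_mul_right h he₀pos
  -- conclude in ℚ
  have hcard : ∀ (s : Set V) [Fintype s], Nat.card s = s.toFinset.card := by
    intro s _
    rw [Nat.card_eq_fintype_card, Set.toFinset_card]
  have hApos : (0 : ℚ) < (Nat.card (autOrbit Γ a₀) : ℚ) := by
    rw [hcard]
    exact_mod_cast hFApos
  rw [div_le_iff₀ hApos]
  have e1 : Nat.card S₁ = FS.card := hcard S₁
  have e2 : Nat.card (autOrbit Γ b₀) = FB.card := hcard _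
  have e3 : Nat.card (autOrbit Γ a₀) = FA.card := hcard _
  have e4 : Nat.card ↥{b ∈ autOrbit Γ b₀ | ∃ a ∈ S₁, Γ.Adj a b} = FS₂.card := hcard _
  rw [e1, e2, e3, e4]
  exact_mod_cast hkey
end

section
/- Let Γ be a graph and K a finite graph. If there is a finite set X of vertices of Γ such that every subgraph of Γ isomorphic to K contains a vertex of X, then there is a finite Aut(Γ)-invariant set Y of vertices of Γ with the same property and |Y| ≤ |X| · |V(K)|. -/
open MulAction Finset
open scoped Pointwise

theorem Set.ncard_le_mul_ncard_of_fiberwise {α β : Type*} {s r : Set α} (hs : s.Finite)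
    (hr : r.Finite) (f : α → β) (k : ℕ)
    (h : ∀ a ∈ s, (s ∩ f ⁻¹' {f a}).ncard ≤ k * (r ∩ f ⁻¹' {f a}).ncard) :
    s.ncard ≤ k * r.ncard := by
  classical
  obtain ⟨s, rfl⟩ := hs.exists_finset_coe
  obtain ⟨r, rfl⟩ := hr.exists_finset_coe
  have hfiber : ∀ (t : Finset α) b, ((t : Set α) ∩ f ⁻¹' {b}).ncard = #{a ∈ t | f a = b} :=
    fun t b => by rw [← Set.ncard_coe_finset, Finset.coe_filter]; rfl
  simp only [hfiber, Set.ncard_coe_finset] at h ⊢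
  calc #s = ∑ b ∈ s.image f, #{a ∈ s | f a = b} := card_eq_sum_card_image f s
    _ ≤ ∑ b ∈ s.image f, k * #{a ∈ r | f a = b} := by
      refine Finset.sum_le_sum ?_
      simp only [Finset.forall_mem_image]
      exact fun a ha => h a ha
    _ = k * #{a ∈ r | f a ∈ s.image f} := by
      rw [← Finset.mul_sum]
      convert congrArg (k * ·) (sum_card_fiberwise_eq_card_filter r (s.image f) f)
    _ ≤ k * #r := Nat.mul_le_mul_left k (Finset.card_filter_le _ _)

namespace MulAction

def heavyOrbitSet (G : Type*) {α : Type*} [Monoid G] [MulAction G α] (X : Set α) (k : ℕ) :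
    Set α :=
  {a | (orbit G a).Finite ∧ (orbit G a).ncard ≤ k * (X ∩ orbit G a).ncard}

variable {G α : Type*} [Group G] [MulAction G α]

section HeavyOrbitSet

variable {X : Set α} {k : ℕ}

theorem mem_heavyOrbitSet_congr {a b : α} (h : orbit G a = orbit G b) :
    a ∈ heavyOrbitSet G X k ↔ b ∈ heavyOrbitSet G X k := by
  simp only [heavyOrbitSet, Set.mem_ofPred_eq, h]

theorem orbit_subset_heavyOrbitSet {a : α} (ha : a ∈ heavyOrbitSet G X k) :
    orbit G a ⊆ heavyOrbitSet G X k :=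
  fun _ hb => (mem_heavyOrbitSet_congr (orbit_eq_iff.mpr hb)).mpr ha

theorem inter_orbit_nonempty_of_mem_heavyOrbitSet {a : α} (ha : a ∈ heavyOrbitSet G X k) :
    (X ∩ orbit G a).Nonempty := by
  have hpos : 0 < (orbit G a).ncard := (Set.ncard_pos ha.1).mpr ⟨a, mem_orbit_self a⟩
  refine Set.nonempty_of_ncard_ne_zero fun h => ?_
  have := ha.2
  rw [h, mul_zero] at this
  omega

theorem heavyOrbitSet_subset_biUnion :
    heavyOrbitSet G X k ⊆ ⋃ x ∈ X ∩ heavyOrbitSet G X k, orbit G x := by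
  intro a ha
  obtain ⟨x, hxX, hxa⟩ := inter_orbit_nonempty_of_mem_heavyOrbitSet ha
  have hx : orbit G x = orbit G a := orbit_eq_iff.mpr hxa
  exact Set.mem_biUnion ⟨hxX, (mem_heavyOrbitSet_congr hx).mpr ha⟩ (hx ▸ mem_orbit_self a)

theorem finite_heavyOrbitSet (hX : X.Finite) : (heavyOrbitSet G X k).Finite :=
  ((hX.inter_of_left _).biUnion fun _ hx => hx.2.1).subset heavyOrbitSet_subset_biUnion

theorem ncard_heavyOrbitSet_le (hX : X.Finite) : (heavyOrbitSet G X k).ncard ≤ k * X.ncard := by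
  refine Set.ncard_le_mul_ncard_of_fiberwise (finite_heavyOrbitSet hX) hX (orbit G) k
    fun a ha => ?_
  have hfiber : orbit G ⁻¹' {orbit G a} = orbit G a := Set.ext fun _ => orbit_eq_iff
  rw [hfiber, Set.inter_eq_right.mpr (orbit_subset_heavyOrbitSet ha)]
  exact ha.2

end HeavyOrbitSet

section CosetCover

variable {ι : Type*} [Fintype ι] {X : Set α}

theorem one_le_sum_ncard_inter_orbit_div (hX : X.Finite) (a : ι → α)
    (hcover : ∀ g : G, ∃ i, g • a i ∈ X) :
    1 ≤ ∑ i, ((X ∩ orbit G (a i)).ncard : ℚ) / (orbit G (a i)).ncard := by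
  have : ∀ i, Fintype ↥(X ∩ orbit G (a i)) := fun i => (hX.inter_of_left _).fintype
  let g : (Σ i, ↥(X ∩ orbit G (a i))) → G := fun p => p.2.2.2.choose
  have hg : ∀ p, g p • a p.1 = p.2 := fun p => p.2.2.2.choose_spec
  have hcosets : ⋃ p ∈ Finset.univ, g p • (stabilizer G (a p.1) : Set G) = Set.univ := by
    refine Set.eq_univ_of_forall fun h => ?_
    obtain ⟨i, hi⟩ := hcover h
    let p : Σ i, ↥(X ∩ orbit G (a i)) := ⟨i, h • a i, hi, mem_orbit _ h⟩
    refine Set.mem_biUnion (Finset.mem_univ p) ((mem_leftCoset_iff _).mpr ?_)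
    rw [SetLike.mem_coe, mem_stabilizer_iff, mul_smul, inv_smul_eq_iff, hg]
  calc 1 ≤ ∑ p : Σ i, ↥(X ∩ orbit G (a i)), ((stabilizer G (a p.1)).index : ℚ)⁻¹ :=
        Subgroup.one_le_sum_inv_index_of_leftCoset_cover hcosets
    _ = ∑ i, ∑ _x : ↥(X ∩ orbit G (a i)), ((orbit G (a i)).ncard : ℚ)⁻¹ := by
        rw [Fintype.sum_sigma]
        simp only [index_stabilizer]
    _ = _ := by
        simp only [Finset.sum_const, Finset.card_univ, nsmul_eq_mul, div_eq_mul_inv,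
          ← Nat.card_eq_fintype_card, Nat.card_coe_set_eq]

theorem exists_mem_heavyOrbitSet (hX : X.Finite) (a : ι → α)
    (hcover : ∀ g : G, ∃ i, g • a i ∈ X) : ∃ i, a i ∈ heavyOrbitSet G X (Fintype.card ι) := by
  have : Nonempty ι := let ⟨i, _⟩ := hcover 1; ⟨i⟩
  have hk : (0 : ℚ) < Fintype.card ι := by exact_mod_cast Fintype.card_pos
  obtain ⟨i, -, hi⟩ := Finset.exists_le_of_sum_le Finset.univ_nonempty
    (f := fun _ => ((Fintype.card ι : ℚ))⁻¹)
    (g := fun i => ((X ∩ orbit G (a i)).ncard : ℚ) / (orbit G (a i)).ncard)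
    (by simpa [hk.ne'] using one_le_sum_ncard_inter_orbit_div hX a hcover)
  -- An infinite orbit has `ncard = 0`, which makes its term of the sum `0`.
  have horbit : (orbit G (a i)).ncard ≠ 0 := fun h0 => by
    simp only [h0, Nat.cast_zero, div_zero] at hi
    exact (inv_pos.mpr hk).not_ge hi
  refine ⟨i, Set.finite_of_ncard_ne_zero horbit, ?_⟩
  rw [le_div_iff₀ (by positivity), inv_mul_le_iff₀ hk] at hi
  exact_mod_cast hi

end CosetCover

end MulAction

section Graph

variable {W V : Type} {K : SimpleGraph W} {Γ : SimpleGraph V} {X : Set V}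

theorem autInvariant_heavyOrbitSet (k : ℕ) : AutInvariant Γ (heavyOrbitSet (Γ ≃g Γ) X k) := by
  intro g
  ext v
  constructor
  · rintro ⟨u, hu, rfl⟩
    exact (mem_heavyOrbitSet_congr (orbit_smul g u)).mpr hu
  · intro hv
    exact ⟨g⁻¹ • v, (mem_heavyOrbitSet_congr (orbit_smul g⁻¹ v)).mpr hv, smul_inv_smul g v⟩

theorem kCover_heavyOrbitSet [Fintype W] (hXfin : X.Finite) (hX : KCover K Γ X) :
    KCover K Γ (heavyOrbitSet (Γ ≃g Γ) X (Fintype.card W)) :=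
  fun f hf => exists_mem_heavyOrbitSet hXfin f fun g => hX (g.toHom.comp f) (g.injective.comp hf)

end Graph

/-- Corollary KL: if a finite vertex set `X` of a (possibly infinite) graph `Γ` meets
every subgraph of `Γ` isomorphic to a finite graph `K`, then there is a finite
`Aut(Γ)`-invariant vertex set `Y` with the same property and `|Y| ≤ |X|·|V(K)|`. -/
theorem stmt18 {W V : Type} [Fintype W] (K : SimpleGraph W) (Γ : SimpleGraph V)
    (X : Set V) (hXfin : X.Finite) (hX : KCover K Γ X) :
    ∃ Y : Set V, Y.Finite ∧ AutInvariant Γ Y ∧ KCover K Γ Y ∧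
      Nat.card Y ≤ Nat.card X * Fintype.card W := by
  refine ⟨heavyOrbitSet (Γ ≃g Γ) X (Fintype.card W), finite_heavyOrbitSet hXfin,
    autInvariant_heavyOrbitSet _, kCover_heavyOrbitSet hXfin hX, ?_⟩
  rw [Nat.card_coe_set_eq, Nat.card_coe_set_eq, mul_comm]
  exact ncard_heavyOrbitSet_le hXfin
end

section
/- Let a group G act on a set U, let M ≥ 1 be an integer, and let 𝓕 be a G-invariant family of finite subsets of U with |F| ≤ M for all F ∈ 𝓕. Let X be a finite set meeting every member of 𝓕. Then Y, defined as the union of all G-orbits O such that |O ∩ X| · M ≥ |O|, is a G-invariant set meeting every member of 𝓕, and |Y| ≤ M · |X|. -/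
open Pointwise

/-- Symmetrization (unweighted form of [KlT25]): if `X` meets every member of a
`G`-invariant family `𝓕` of sets of size at most `M`, then the union `Y` of all orbits
`O` with `|O ∩ X| · M ≥ |O|` (as cardinals) is `G`-invariant, meets every member of
`𝓕`, and `|Y| ≤ M · |X|`. -/
theorem stmt19 {G U : Type} [Group G] [MulAction G U] (M : ℕ) (hM : 1 ≤ M)
    (𝓕 : Set (Set U))
    (hfin : ∀ F ∈ 𝓕, F.Finite ∧ Nat.card F ≤ M)
    (hinv : ∀ (g : G), ∀ F ∈ 𝓕, (g • F) ∈ 𝓕)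
    (X : Set U) (hXfin : X.Finite)
    (hX : ∀ F ∈ 𝓕, (X ∩ F).Nonempty) :
    (∀ g : G, g • {u : U | Cardinal.mk ↥(MulAction.orbit G u)
        ≤ Cardinal.mk ↥(MulAction.orbit G u ∩ X) * M}
      = {u : U | Cardinal.mk ↥(MulAction.orbit G u)
        ≤ Cardinal.mk ↥(MulAction.orbit G u ∩ X) * M}) ∧
    (∀ F ∈ 𝓕, ({u : U | Cardinal.mk ↥(MulAction.orbit G u)
        ≤ Cardinal.mk ↥(MulAction.orbit G u ∩ X) * M} ∩ F).Nonempty) ∧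
    Nat.card {u : U | Cardinal.mk ↥(MulAction.orbit G u)
        ≤ Cardinal.mk ↥(MulAction.orbit G u ∩ X) * M} ≤ M * Nat.card X := by
  classical
  set Y : Set U := {u : U | Cardinal.mk ↥(MulAction.orbit G u)
        ≤ Cardinal.mk ↥(MulAction.orbit G u ∩ X) * M} with hYdef
  have hmemY : ∀ u : U, u ∈ Y ↔ Cardinal.mk ↥(MulAction.orbit G u)
        ≤ Cardinal.mk ↥(MulAction.orbit G u ∩ X) * M := fun u => Iff.rfl
  have horb : ∀ u v : U, MulAction.orbit G u = MulAction.orbit G v → (u ∈ Y ↔ v ∈ Y) := by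
    intro u v h
    rw [hmemY, hmemY, h]
  have hM0 : (0 : ℚ) < M := by exact_mod_cast hM
  refine ⟨?_, ?_, ?_⟩
  · -- invariance
    intro g
    ext u
    rw [Set.mem_smul_set_iff_inv_smul_mem]
    exact horb _ u (MulAction.orbit_smul g⁻¹ u)
  · -- meets every F
    intro F hF
    by_contra hcon
    rw [Set.not_nonempty_iff_eq_empty, Set.eq_empty_iff_forall_notMem] at hcon
    have hbad : ∀ u ∈ F, Cardinal.mk ↥(MulAction.orbit G u ∩ X) * M
        < Cardinal.mk ↥(MulAction.orbit G u) := by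
      intro u hu
      by_contra h
      exact hcon u ⟨not_lt.mp h, hu⟩
    obtain ⟨hFfin, hFcard⟩ := hfin F hF
    have hFne : F.Nonempty := let ⟨x, hx⟩ := hX F hF; ⟨x, hx.2⟩
    have hfibfin : ∀ u : U, (MulAction.orbit G u ∩ X).Finite :=
      fun u => hXfin.inter_of_right _
    set s : Finset ((_ : U) × U) :=
      hFfin.toFinset.sigma (fun u => (hfibfin u).toFinset) with hsdef
    set Hs : ((_ : U) × U) → Subgroup G := fun p => MulAction.stabilizer G p.1 with hHs
    set gs : ((_ : U) × U) → G := fun p =>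
      if h : p.2 ∈ MulAction.orbit G p.1 then h.choose else 1 with hgs
    have hgspec : ∀ (p : (_ : U) × U), p.2 ∈ MulAction.orbit G p.1 → gs p • p.1 = p.2 := by
      intro p hp
      rw [hgs]
      simp only [dif_pos hp]
      exact hp.choose_spec
    have hcover : ⋃ p ∈ s, gs p • (Hs p : Set G) = Set.univ := by
      rw [Set.eq_univ_iff_forall]
      intro γ
      obtain ⟨x, hxX, hxF⟩ := hX (γ • F) (hinv γ F hF)
      obtain ⟨u, huF, rfl⟩ := hxF
      have hmem : γ • u ∈ MulAction.orbit G u := ⟨γ, rfl⟩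
      have hxX' : γ • u ∈ X := hxX
      have hps : (⟨u, γ • u⟩ : (_ : U) × U) ∈ s := by
        rw [hsdef, Finset.mem_sigma]
        exact ⟨hFfin.mem_toFinset.mpr huF, (hfibfin u).mem_toFinset.mpr ⟨hmem, hxX'⟩⟩
      refine Set.mem_biUnion hps ?_
      rw [mem_leftCoset_iff, SetLike.mem_coe, hHs]
      have hr : gs ⟨u, γ • u⟩ • u = γ • u := hgspec ⟨u, γ • u⟩ hmem
      rw [MulAction.mem_stabilizer_iff, mul_smul, inv_smul_eq_iff]; exact hr.symm
    have hge := Subgroup.one_le_sum_inv_index_of_leftCoset_cover hcover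
    rw [hsdef, Finset.sum_sigma] at hge
    simp only [hHs] at hge
    have hterm : ∀ u ∈ hFfin.toFinset,
        (∑ _x ∈ (hfibfin u).toFinset, ((MulAction.stabilizer G u).index : ℚ)⁻¹)
          < (M : ℚ)⁻¹ := by
      intro u hu
      have huF := hFfin.mem_toFinset.mp hu
      rw [Finset.sum_const, nsmul_eq_mul]
      have hcard : ((hfibfin u).toFinset.card) = Nat.card ↥(MulAction.orbit G u ∩ X) := by
        rw [Nat.card_coe_set_eq, Set.ncard_eq_toFinset_card _ (hfibfin u)]
      have hind : (MulAction.stabilizer G u).index = Nat.card ↥(MulAction.orbit G u) := by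
        rw [MulAction.index_stabilizer, Nat.card_coe_set_eq]
      by_cases hOfin : (MulAction.orbit G u).Finite
      · have hmk := Cardinal.toNat_lt_toNat (hbad u huF) hOfin.lt_aleph0
        rw [map_mul, Cardinal.toNat_natCast] at hmk
        have hmk' : Nat.card ↥(MulAction.orbit G u ∩ X) * M
            < Nat.card ↥(MulAction.orbit G u) := hmk
        rw [hcard, hind]
        have hn0 : (0 : ℚ) < (Nat.card ↥(MulAction.orbit G u) : ℚ) := by
          exact_mod_cast lt_of_le_of_lt (Nat.zero_le _) hmk'
        rw [← div_eq_mul_inv, inv_eq_one_div, div_lt_div_iff₀ hn0 hM0]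
        have hq : (Nat.card ↥(MulAction.orbit G u ∩ X) : ℚ) * M
            < Nat.card ↥(MulAction.orbit G u) := by exact_mod_cast hmk'
        linarith
      · have hinfty : Infinite ↥(MulAction.orbit G u) := Set.infinite_coe_iff.mpr hOfin
        have h0 : (MulAction.stabilizer G u).index = 0 := by
          rw [hind, Nat.card_eq_zero_of_infinite]
        rw [h0]
        simpa using inv_pos.mpr hM0
    have hne' : hFfin.toFinset.Nonempty := by rwa [Set.Finite.toFinset_nonempty]
    have hsum := Finset.sum_lt_sum_of_nonempty hne' hterm
    rw [Finset.sum_const, nsmul_eq_mul] at hsum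
    have hcardF : (hFfin.toFinset.card : ℚ) ≤ M := by
      have he : hFfin.toFinset.card = Nat.card ↥F := by
        rw [Nat.card_coe_set_eq, Set.ncard_eq_toFinset_card _ hFfin]
      exact_mod_cast he ▸ hFcard
    have hlt1 : ∑ u ∈ hFfin.toFinset,
        ∑ _x ∈ (hfibfin u).toFinset, ((MulAction.stabilizer G u).index : ℚ)⁻¹ < 1 := by
      calc ∑ u ∈ hFfin.toFinset,
          ∑ _x ∈ (hfibfin u).toFinset, ((MulAction.stabilizer G u).index : ℚ)⁻¹
          < hFfin.toFinset.card * (M : ℚ)⁻¹ := hsum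
        _ ≤ M * (M : ℚ)⁻¹ := by
            exact mul_le_mul_of_nonneg_right hcardF (inv_nonneg.mpr hM0.le)
        _ = 1 := mul_inv_cancel₀ (ne_of_gt hM0)
    exact absurd hge (not_le.mpr hlt1)
  · -- cardinality bound
    rcases Set.eq_empty_or_nonempty Y with hYe | ⟨y0, hy0⟩
    · rw [hYe]
      simp
    · have hXne : X.Nonempty := by
        by_contra hxe
        rw [Set.not_nonempty_iff_eq_empty] at hxe
        have h0 : Cardinal.mk ↥(MulAction.orbit G y0)
            ≤ Cardinal.mk ↥(MulAction.orbit G y0 ∩ X) * M := (hmemY y0).mp hy0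
        have he : MulAction.orbit G y0 ∩ X = (∅ : Set U) := by rw [hxe, Set.inter_empty]
        rw [he] at h0
        simp only [Cardinal.mk_eq_zero, zero_mul, le_zero_iff, Cardinal.mk_eq_zero_iff] at h0
        exact h0.elim' ⟨y0, MulAction.mem_orbit_self y0⟩
      obtain ⟨x0, hx0⟩ := hXne
      have hemb : ∀ u ∈ Y,
          Nonempty (↥(MulAction.orbit G u) ↪ ↥(MulAction.orbit G u ∩ X) × Fin M) := by
        intro u hu
        have hu' := (hmemY u).mp hu
        have hcast : Cardinal.mk ↥(MulAction.orbit G u ∩ X) * M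
            = Cardinal.mk (↥(MulAction.orbit G u ∩ X) × Fin M) := by
          rw [Cardinal.mk_prod, Cardinal.mk_fin, Cardinal.lift_id, Cardinal.lift_id]
        rw [hcast] at hu'
        exact (Cardinal.le_def _ _).mp hu'
      set Ψ : Set U → U → ↥X × Fin M := fun O w =>
        if h : Nonempty (↥O ↪ ↥(O ∩ X) × Fin M) ∧ w ∈ O then
          ((⟨((h.1.some ⟨w, h.2⟩).1 : U), (h.1.some ⟨w, h.2⟩).1.2.2⟩ : ↥X),
            (h.1.some ⟨w, h.2⟩).2)
        else (⟨x0, hx0⟩, ⟨0, hM⟩) with hΨdef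
      have hA : ∀ (O : Set U) (w : U) (hc : Nonempty (↥O ↪ ↥(O ∩ X) × Fin M)) (hw : w ∈ O),
          Ψ O w = ((⟨((hc.some ⟨w, hw⟩).1 : U), (hc.some ⟨w, hw⟩).1.2.2⟩ : ↥X),
            (hc.some ⟨w, hw⟩).2) := by
        intro O w hc hw
        simp only [hΨdef]
        rw [dif_pos (⟨hc, hw⟩ : Nonempty (↥O ↪ ↥(O ∩ X) × Fin M) ∧ w ∈ O)]
      set Φ : ↥Y → ↥X × Fin M := fun y => Ψ (MulAction.orbit G y.1) y.1 with hΦdef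
      have hΦinj : Function.Injective Φ := by
        rintro ⟨u, hu⟩ ⟨v, hv⟩ h
        simp only [hΦdef] at h
        apply Subtype.ext
        have hcopy := h
        rw [hA _ u (hemb u hu) (MulAction.mem_orbit_self u),
            hA _ v (hemb v hv) (MulAction.mem_orbit_self v)] at hcopy
        have hx : ((((hemb u hu).some ⟨u, MulAction.mem_orbit_self u⟩).1 : ↥(MulAction.orbit G u ∩ X)) : U)
            = ((((hemb v hv).some ⟨v, MulAction.mem_orbit_self v⟩).1 : ↥(MulAction.orbit G v ∩ X)) : U) :=
          congrArg (fun p => ((p.1 : ↥X) : U)) hcopy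
        have horb_eq : MulAction.orbit G u = MulAction.orbit G v := by
          rw [← MulAction.orbit_eq_iff.mpr
                (((hemb u hu).some ⟨u, MulAction.mem_orbit_self u⟩).1.2.1),
              ← MulAction.orbit_eq_iff.mpr
                (((hemb v hv).some ⟨v, MulAction.mem_orbit_self v⟩).1.2.1),
              hx]
        have hu' : u ∈ MulAction.orbit G v := horb_eq ▸ MulAction.mem_orbit_self u
        rw [horb_eq] at h
        rw [hA _ u (hemb v hv) hu', hA _ v (hemb v hv) (MulAction.mem_orbit_self v)] at h
        have hx2 : ((((hemb v hv).some ⟨u, hu'⟩).1 : ↥(MulAction.orbit G v ∩ X)) : U)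
            = ((((hemb v hv).some ⟨v, MulAction.mem_orbit_self v⟩).1 :
                ↥(MulAction.orbit G v ∩ X)) : U) :=
          congrArg (fun p => ((p.1 : ↥X) : U)) h
        have hk2 := congrArg Prod.snd h
        have hpq : (hemb v hv).some ⟨u, hu'⟩
            = (hemb v hv).some ⟨v, MulAction.mem_orbit_self v⟩ :=
          Prod.ext (Subtype.ext hx2) hk2
        have := (hemb v hv).some.injective hpq
        have h6 : u = v := Subtype.ext_iff.mp this
        exact h6
      have hXsub : Finite ↥X := hXfin.to_subtype
      have hcard := Nat.card_le_card_of_injective Φ hΦinj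
      rw [Nat.card_prod] at hcard
      simpa [mul_comm] using hcard
end
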